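/- arXiv:math/0608241 — 7 statements merged into one kernel-verified Lean document; each statement's English description precedes it below -/
import Mathlib

section
/- (Contraction principle.) Let X and Y be Polish spaces, let μ_ref be a probability measure on X satisfying the strong TCI with a continuous cost function c_ref : X × X → [0,∞), let c : Y × Y → [0,∞) be a continuous cost function, and let T : X → Y be a measurable map such that c(T x₁, T x₂) ≤ c_ref(x₁, x₂) for all x₁, x₂ ∈ X. Then the probability measure μ = T♯μ_ref on Y satisfies the strong TCI with cost c. -/
open MeasureTheory ProbabilityTheory Filter Set ENNReal

noncomputable section

/-- Optimal transportation cost between `ν` and `μ` for the cost function `c`. -/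
def transportCost {X : Type*} [MeasurableSpace X] (c : X → X → ℝ) (ν μ : Measure X) : ℝ≥0∞ :=
  ⨅ (π : Measure (X × X)) (_ : π.map Prod.fst = ν) (_ : π.map Prod.snd = μ),
    ∫⁻ p, ENNReal.ofReal (c p.1 p.2) ∂π

open Classical in
/-- Relative entropy `H(ν|μ)`. -/
def relEntropy {X : Type*} [MeasurableSpace X] (ν μ : Measure X) : ℝ≥0∞ :=
  if ν ≪ μ ∧ Integrable (llr ν μ) ν then ENNReal.ofReal (∫ x, llr ν μ x ∂ν) else ⊤

/-- `μ` satisfies the transportation-cost inequality with cost `c`. -/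
def TCI {X : Type*} [MeasurableSpace X] (μ : Measure X) (c : X → X → ℝ) : Prop :=
  ∀ ν : Measure X, IsProbabilityMeasure ν → transportCost c ν μ ≤ relEntropy ν μ

/-- `μ` satisfies the strong transportation-cost inequality with cost `c`. -/
def StrongTCI {X : Type*} [MeasurableSpace X] (μ : Measure X) (c : X → X → ℝ) : Prop :=
  ∀ ν β : Measure X, IsProbabilityMeasure ν → IsProbabilityMeasure β →
    transportCost c ν β ≤ relEntropy ν μ + relEntropy β μ

/-- The class `𝒜` of admissible cost functions. -/
def MemA (α : ℝ → ℝ) : Prop :=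
  (∀ x, 0 ≤ α x) ∧ (∀ x, α (-x) = α x) ∧ Continuous α ∧
  MonotoneOn α (Ici 0) ∧ α 0 = 0 ∧
  (∀ x y : ℝ, 0 ≤ x → 0 ≤ y → α x + α y ≤ α (x + y)) ∧
  (∀ t : ℝ, |t| ≤ 1 → α t = t ^ 2)

/-- The two-sided exponential measure `dμ₁(x) = ½ e^{-|x|} dx`. -/
def expMeasure : Measure ℝ :=
  volume.withDensity fun x => ENNReal.ofReal ((1 / 2) * Real.exp (-|x|))

/-- The monotone rearrangement map `T = F⁻¹ ∘ F₁` transporting `μ₁` onto `μ`. -/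
def rearrange (μ : Measure ℝ) : ℝ → ℝ :=
  fun x => sInf {z : ℝ | cdf expMeasure x ≤ cdf μ z}

/-- `μ_x^+ = Law(X - x | X ≥ x)`. -/
def condPlus (μ : Measure ℝ) (x : ℝ) : Measure ℝ := (μ[|Ici x]).map fun z => z - x

/-- `μ_x^- = Law(x - X | X ≤ x)`. -/
def condMinus (μ : Measure ℝ) (x : ℝ) : Measure ℝ := (μ[|Iic x]).map fun z => x - z

/-- The class `𝒱` of good potentials. -/
def MemV (f : ℝ → ℝ) : Prop :=
  ContDiff ℝ 2 f ∧
  (∃ x₀ > (0:ℝ), ∀ x, x ∈ Iic (-x₀) ∪ Ici x₀ → 0 < deriv f x) ∧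
  Tendsto (fun x => deriv (deriv f) x / (deriv f x) ^ 2) atTop (nhds 0) ∧
  Tendsto (fun x => deriv (deriv f) x / (deriv f x) ^ 2) atBot (nhds 0)

/-- Convex conjugate `g*(s) = sup_t (st - g(t))`. -/
def conj (g : ℝ → ℝ) (s : ℝ) : ℝ := sSup (Set.range fun t => s * t - g t)

/-- The entropy functional `Ent_μ(g)`. -/
def entFun (μ : Measure ℝ) (g : ℝ → ℝ) : ℝ :=
  ∫ x, g x * Real.log (g x) ∂μ - (∫ x, g x ∂μ) * Real.log (∫ x, g x ∂μ)

/-- The modified logarithmic Sobolev inequality `LSI_β(C,t)`. -/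
def LSI (μ : Measure ℝ) (β : ℝ → ℝ) (C t : ℝ) : Prop :=
  ∀ f : ℝ → ℝ, ContDiff ℝ 1 f → HasCompactSupport f →
    entFun μ (fun x => (f x) ^ 2) ≤ C * ∫ x, β (t * deriv f x / f x) * (f x) ^ 2 ∂μ

lemma transportCost_map_le' {X Y : Type*} [MeasurableSpace X] [MeasurableSpace Y]
    (cref : X → X → ℝ) (c : Y → Y → ℝ)
    (hc : Measurable fun p : Y × Y => c p.1 p.2)
    (T : X → Y) (hT : Measurable T)
    (hcontr : ∀ x₁ x₂, c (T x₁) (T x₂) ≤ cref x₁ x₂)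
    (ν' β' : Measure X) :
    transportCost c (ν'.map T) (β'.map T) ≤ transportCost cref ν' β' := by
  refine le_iInf fun π => le_iInf fun h1 => le_iInf fun h2 => ?_
  have hTT : Measurable fun p : X × X => (T p.1, T p.2) :=
    (hT.comp measurable_fst).prodMk (hT.comp measurable_snd)
  have hm1 : (π.map fun p : X × X => (T p.1, T p.2)).map Prod.fst = ν'.map T := by
    rw [Measure.map_map measurable_fst hTT, ← h1, Measure.map_map hT measurable_fst]
    rfl
  have hm2 : (π.map fun p : X × X => (T p.1, T p.2)).map Prod.snd = β'.map T := by
    rw [Measure.map_map measurable_snd hTT, ← h2, Measure.map_map hT measurable_snd]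
    rfl
  have step : transportCost c (ν'.map T) (β'.map T) ≤
      ∫⁻ p, ENNReal.ofReal (c p.1 p.2) ∂(π.map fun p : X × X => (T p.1, T p.2)) :=
    iInf_le_of_le (π.map fun p : X × X => (T p.1, T p.2))
      (iInf_le_of_le hm1 (iInf_le_of_le hm2 le_rfl))
  refine step.trans ?_
  rw [lintegral_map hc.ennreal_ofReal hTT]
  exact lintegral_mono fun p => ENNReal.ofReal_le_ofReal (hcontr _ _)

lemma pullback_entropy' {X Y : Type*} [MeasurableSpace X] [MeasurableSpace Y]
    (μref : Measure X) [IsProbabilityMeasure μref] (T : X → Y) (hT : Measurable T)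
    (ν : Measure Y) [IsProbabilityMeasure ν]
    (hac : ν ≪ μref.map T) (hint : Integrable (llr ν (μref.map T)) ν) :
    ∃ ν' : Measure X, IsProbabilityMeasure ν' ∧ ν'.map T = ν ∧
      relEntropy ν' μref = relEntropy ν (μref.map T) := by
  haveI : IsProbabilityMeasure (μref.map T) := Measure.isProbabilityMeasure_map hT.aemeasurable
  set μ := μref.map T with hμdef
  have hgm : Measurable (ν.rnDeriv μ) := Measure.measurable_rnDeriv ν μ
  set ν' := μref.withDensity fun x => ν.rnDeriv μ (T x) with hν'def
  have hmap : ν'.map T = ν := by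
    ext s hs
    rw [Measure.map_apply hT hs, hν'def, withDensity_apply _ (hT hs),
      ← setLIntegral_map hs hgm hT, ← hμdef, Measure.setLIntegral_rnDeriv hac]
  have hprob : IsProbabilityMeasure ν' := by
    constructor
    rw [← Set.preimage_univ (f := T), ← Measure.map_apply hT MeasurableSet.univ, hmap]
    exact measure_univ
  have hac' : ν' ≪ μref := withDensity_absolutelyContinuous _ _
  have hrn : ν'.rnDeriv μref =ᵐ[μref] fun x => ν.rnDeriv μ (T x) :=
    Measure.rnDeriv_withDensity μref (hgm.comp hT)
  set F : Y → ℝ := fun y => Real.log (ν.rnDeriv μ y).toReal with hF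
  have hllr : llr ν' μref =ᵐ[ν'] fun x => F (T x) := by
    filter_upwards [hrn.filter_mono hac'.ae_le] with x hx
    rw [llr, hx]
  have hmeas : Measurable F := hgm.ennreal_toReal.log
  have hllrν : llr ν μ = F := rfl
  have hasm : AEStronglyMeasurable F (ν'.map T) := by
    rw [hmap]; exact hmeas.aestronglyMeasurable
  have hint' : Integrable (llr ν' μref) ν' := by
    rw [integrable_congr hllr]
    exact (integrable_map_measure hasm hT.aemeasurable).mp
      (by rw [hmap]; exact hllrν ▸ hint)
  have hIeq : ∫ x, llr ν' μref x ∂ν' = ∫ y, llr ν μ y ∂ν := by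
    rw [integral_congr_ae hllr, hllrν, ← hmap, integral_map hT.aemeasurable hasm]
  refine ⟨ν', hprob, hmap, ?_⟩
  unfold relEntropy
  rw [if_pos ⟨hac', hint'⟩, if_pos ⟨hac, hint⟩, hIeq]

/-- Contraction principle for strong TCIs. -/
theorem stmt8 {X Y : Type*}
    [MeasurableSpace X] [TopologicalSpace X] [PolishSpace X] [BorelSpace X]
    [MeasurableSpace Y] [TopologicalSpace Y] [PolishSpace Y] [BorelSpace Y]
    (cref : X → X → ℝ) (hcrefnn : ∀ x₁ x₂, 0 ≤ cref x₁ x₂)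
    (hcref : Continuous fun p : X × X => cref p.1 p.2)
    (c : Y → Y → ℝ) (hcnn : ∀ y₁ y₂, 0 ≤ c y₁ y₂)
    (hc : Continuous fun p : Y × Y => c p.1 p.2)
    (μref : Measure X) [IsProbabilityMeasure μref]
    (hTCI : StrongTCI μref cref)
    (T : X → Y) (hT : Measurable T)
    (hcontr : ∀ x₁ x₂, c (T x₁) (T x₂) ≤ cref x₁ x₂) :
    StrongTCI (μref.map T) c := by
  intro ν β hνp hβp
  by_cases hν1 : ν ≪ μref.map T ∧ Integrable (llr ν (μref.map T)) ν
  swap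
  · unfold relEntropy
    rw [if_neg hν1, top_add]
    exact le_top
  by_cases hβ1 : β ≪ μref.map T ∧ Integrable (llr β (μref.map T)) β
  swap
  · unfold relEntropy
    rw [if_neg hβ1, add_top]
    exact le_top
  obtain ⟨ν', hν'p, hν'map, hν'ent⟩ := pullback_entropy' μref T hT ν hν1.1 hν1.2
  obtain ⟨β', hβ'p, hβ'map, hβ'ent⟩ := pullback_entropy' μref T hT β hβ1.1 hβ1.2
  calc transportCost c ν β = transportCost c (ν'.map T) (β'.map T) := by
        rw [hν'map, hβ'map]
    _ ≤ transportCost cref ν' β' :=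
        transportCost_map_le' cref c hc.measurable T hT hcontr ν' β'
    _ ≤ relEntropy ν' μref + relEntropy β' μref := hTCI ν' β' hν'p hβ'p
    _ = relEntropy ν (μref.map T) + relEntropy β (μref.map T) := by
        rw [hν'ent, hβ'ent]

end
end

section
/- Let X be a Polish space, c : X × X → [0,∞) a continuous cost function, and μ a probability measure on X satisfying the strong TCI with cost c. Then for every measurable set A ⊆ X with μ(A) > 0 and every r ≥ 0, one has μ(A_c^r) ≥ 1 − e^{−r}/μ(A), where A_c^r = {y ∈ X : ∃x ∈ A with c(x,y) ≤ r}. -/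
open MeasureTheory ProbabilityTheory Filter Set ENNReal

noncomputable section

lemma relEntropy_cond {X : Type*} [MeasurableSpace X] (μ : Measure X) [IsProbabilityMeasure μ]
    {A : Set X} (hA : MeasurableSet A) (h0 : μ A ≠ 0) :
    relEntropy (μ[|A]) μ = ENNReal.ofReal (-Real.log (μ A).toReal) := by
  have hne : (μ A)⁻¹ ≠ ⊤ := by simp [h0]
  set ν := μ[|A] with hν
  have hac : ν ≪ μ := ProbabilityTheory.cond_absolutelyContinuous
  have hAe : ∀ᵐ x ∂ν, x ∈ A := by
    rw [ae_iff]
    have : {x | ¬ x ∈ A} = Aᶜ := rfl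
    rw [this, hν, ProbabilityTheory.cond_apply hA, Set.inter_compl_self, measure_empty,
      mul_zero]
  have hrn : ν.rnDeriv μ =ᵐ[μ] fun x => (μ A)⁻¹ * A.indicator 1 x := by
    have h1 : ((μ A)⁻¹ • μ.restrict A).rnDeriv μ =ᵐ[μ] (μ A)⁻¹ • (μ.restrict A).rnDeriv μ :=
      Measure.rnDeriv_smul_left_of_ne_top (μ.restrict A) μ hne
    have h2 : (μ.restrict A).rnDeriv μ =ᵐ[μ] A.indicator 1 :=
      Measure.rnDeriv_restrict_self μ hA
    filter_upwards [h1, h2] with x hx1 hx2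
    rw [hν, ProbabilityTheory.cond, hx1]
    simp [hx2]
  have key : llr ν μ =ᵐ[ν] fun _ => -Real.log (μ A).toReal := by
    filter_upwards [hrn.filter_mono hac.ae_le, hAe] with x hx hxA
    rw [MeasureTheory.llr, hx]
    simp [Set.indicator_of_mem hxA, ENNReal.toReal_inv, Real.log_inv]
  have hint : Integrable (llr ν μ) ν :=
    (integrable_const (-Real.log (μ A).toReal)).congr key.symm
  have : IsProbabilityMeasure ν := ProbabilityTheory.cond_isProbabilityMeasure h0
  rw [relEntropy, if_pos ⟨hac, hint⟩, integral_congr_ae key, integral_const]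
  simp

/-- Concentration of measure from a strong TCI. -/
theorem stmt9 {X : Type*}
    [MeasurableSpace X] [TopologicalSpace X] [PolishSpace X] [BorelSpace X]
    (c : X → X → ℝ) (hcnn : ∀ x y, 0 ≤ c x y)
    (hc : Continuous fun p : X × X => c p.1 p.2)
    (μ : Measure X) [IsProbabilityMeasure μ]
    (hTCI : StrongTCI μ c)
    (A : Set X) (hA : MeasurableSet A) (hApos : 0 < μ A) (r : ℝ) (hr : 0 ≤ r) :
    1 - ENNReal.ofReal (Real.exp (-r)) / μ A ≤ μ {y : X | ∃ x ∈ A, c x y ≤ r} := by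
  set B := {y : X | ∀ x ∈ A, r ≤ c x y} with hBdef
  have hBclosed : IsClosed B := by
    have hEq : B = ⋂ x ∈ A, {y | r ≤ c x y} := by
      ext y; simp [hBdef]
    rw [hEq]
    exact isClosed_biInter fun x _ =>
      isClosed_le continuous_const (hc.comp (Continuous.prodMk_right x))
  have hBm : MeasurableSet B := hBclosed.measurableSet
  have hsub : Bᶜ ⊆ {y : X | ∃ x ∈ A, c x y ≤ r} := by
    intro y hy
    simp only [hBdef, mem_compl_iff, mem_setOf_eq, not_forall, not_le] at hy
    obtain ⟨x, hx, hxy⟩ := hy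
    exact ⟨x, hx, hxy.le⟩
  have hA0 : μ A ≠ 0 := hApos.ne'
  have key : μ B ≤ ENNReal.ofReal (Real.exp (-r)) / μ A := by
    by_cases hB0 : μ B = 0
    · simp [hB0]
    · set ν := μ[|A] with hνdef
      set β := μ[|B] with hβdef
      have hνP : IsProbabilityMeasure ν := ProbabilityTheory.cond_isProbabilityMeasure hA0
      have hβP : IsProbabilityMeasure β := ProbabilityTheory.cond_isProbabilityMeasure hB0
      have h1 := hTCI ν β hνP hβP
      have hνc : ν Aᶜ = 0 := by
        rw [hνdef, ProbabilityTheory.cond_apply hA, Set.inter_compl_self, measure_empty, mul_zero]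
      have hβc : β Bᶜ = 0 := by
        rw [hβdef, ProbabilityTheory.cond_apply hBm, Set.inter_compl_self, measure_empty, mul_zero]
      have hT : ENNReal.ofReal r ≤ transportCost c ν β := by
        rw [transportCost]
        refine le_iInf fun π => le_iInf fun hfst => le_iInf fun hsnd => ?_
        have hπ1 : π (Prod.fst ⁻¹' Aᶜ) = 0 := by
          rw [← Measure.map_apply measurable_fst hA.compl, hfst]; exact hνc
        have hπ2 : π (Prod.snd ⁻¹' Bᶜ) = 0 := by
          rw [← Measure.map_apply measurable_snd hBm.compl, hsnd]; exact hβc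
        have hπc : π ((A ×ˢ B)ᶜ) = 0 := by
          refine measure_mono_null ?_ (measure_union_null hπ1 hπ2)
          intro p hp
          simp only [mem_compl_iff, Set.mem_prod, not_and] at hp
          by_cases h : p.1 ∈ A
          · exact Or.inr (hp h)
          · exact Or.inl h
        have hπu : π Set.univ = 1 := by
          have : π.map Prod.fst Set.univ = 1 := by rw [hfst]; exact measure_univ
          rwa [Measure.map_apply measurable_fst MeasurableSet.univ, Set.preimage_univ] at this
        have hπAB : π (A ×ˢ B) = 1 := by
          have := measure_add_measure_compl (μ := π) (hA.prod hBm)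
          rw [hπc, add_zero, hπu] at this
          exact this
        calc ENNReal.ofReal r = ∫⁻ _ in A ×ˢ B, ENNReal.ofReal r ∂π := by
              rw [setLIntegral_const, hπAB, mul_one]
          _ ≤ ∫⁻ p in A ×ˢ B, ENNReal.ofReal (c p.1 p.2) ∂π := by
              refine setLIntegral_mono (hc.measurable.ennreal_ofReal) fun p hp => ?_
              exact ENNReal.ofReal_le_ofReal (hp.2 p.1 hp.1)
          _ ≤ ∫⁻ p, ENNReal.ofReal (c p.1 p.2) ∂π := setLIntegral_le_lintegral _ _
      rw [relEntropy_cond μ hA hA0, relEntropy_cond μ hBm hB0] at h1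
      set a := (μ A).toReal with hadef
      set b := (μ B).toReal with hbdef
      have ha0 : 0 < a := ENNReal.toReal_pos hA0 (measure_ne_top μ A)
      have hb0 : 0 < b := ENNReal.toReal_pos hB0 (measure_ne_top μ B)
      have ha1 : a ≤ 1 := by
        rw [hadef]; exact ENNReal.toReal_le_of_le_ofReal one_pos.le (by simpa using prob_le_one)
      have hb1 : b ≤ 1 := by
        rw [hbdef]; exact ENNReal.toReal_le_of_le_ofReal one_pos.le (by simpa using prob_le_one)
      have hla : 0 ≤ -Real.log a := by simpa using Real.log_nonpos ha0.le ha1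
      have hlb : 0 ≤ -Real.log b := by simpa using Real.log_nonpos hb0.le hb1
      have h2 : ENNReal.ofReal r ≤ ENNReal.ofReal (-Real.log a + -Real.log b) := by
        rw [ENNReal.ofReal_add hla hlb]
        exact hT.trans h1
      have h3 : r ≤ -Real.log a + -Real.log b :=
        (ENNReal.ofReal_le_ofReal_iff (by linarith)).mp h2
      have h4 : Real.log (a * b) ≤ -r := by
        rw [Real.log_mul ha0.ne' hb0.ne']; linarith
      have h5 : a * b ≤ Real.exp (-r) := by
        calc a * b = Real.exp (Real.log (a * b)) := (Real.exp_log (by positivity)).symm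
          _ ≤ Real.exp (-r) := Real.exp_le_exp.mpr h4
      have h6 : b ≤ Real.exp (-r) / a := (le_div_iff₀ ha0).mpr (by linarith [h5, mul_comm a b]; )
      calc μ B = ENNReal.ofReal b := (ENNReal.ofReal_toReal (measure_ne_top μ B)).symm
        _ ≤ ENNReal.ofReal (Real.exp (-r) / a) := ENNReal.ofReal_le_ofReal h6
        _ = ENNReal.ofReal (Real.exp (-r)) / ENNReal.ofReal a := ENNReal.ofReal_div_of_pos ha0
        _ = ENNReal.ofReal (Real.exp (-r)) / μ A := by
            rw [hadef, ENNReal.ofReal_toReal (measure_ne_top μ A)]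
  calc 1 - ENNReal.ofReal (Real.exp (-r)) / μ A ≤ 1 - μ B := tsub_le_tsub_left key 1
    _ = μ Bᶜ := (prob_compl_eq_one_sub hBm).symm
    _ ≤ μ {y : X | ∃ x ∈ A, c x y ≤ r} := measure_mono hsub


end
end

section
/- Let X be a Polish space, c : X × X → [0,∞) a continuous cost function, and μ a probability measure on X satisfying the strong TCI with cost c. Then for every measurable set A ⊆ X, ∫ e^{c(x,A)} dμ(x) · μ(A) ≤ 1, where c(x,A) = inf_{y∈A} c(x,y). -/
open MeasureTheory ProbabilityTheory Filter Set ENNReal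

noncomputable section

private lemma integrable_of_bdd' {X : Type*} [MeasurableSpace X] {μ : Measure X}
    [IsFiniteMeasure μ] {f : X → ℝ} (hm : Measurable f) (C : ℝ) (h : ∀ x, |f x| ≤ C) :
    Integrable f μ :=
  (integrable_const C).mono' hm.aestronglyMeasurable (ae_of_all _ fun x => by
    simpa using h x)

private lemma key_ineq' (t L : ℝ) :
    Real.exp t * L + (Real.exp t - Real.exp L) ≤ Real.exp t * t := by
  have h := Real.add_one_le_exp (L - t)
  have h2 : (L - t + 1) * Real.exp t ≤ Real.exp (L - t) * Real.exp t :=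
    mul_le_mul_of_nonneg_right h (Real.exp_pos t).le
  rw [← Real.exp_add] at h2
  have h3 : L - t + t = L := by ring
  rw [h3] at h2
  nlinarith [Real.exp_pos t]

private lemma measurable_infDist_aux11 {X : Type*}
    [MeasurableSpace X] [TopologicalSpace X] [PolishSpace X] [BorelSpace X]
    (c : X → X → ℝ) (hcnn : ∀ x y, 0 ≤ c x y)
    (hc : Continuous fun p : X × X => c p.1 p.2)
    (A : Set X) (hAne : A.Nonempty) :
    Measurable fun x => ⨅ y : A, c x y := by
  haveI : Nonempty ↥A := hAne.to_subtype
  have hbdd : ∀ x, BddBelow (Set.range fun y : A => c x y) := fun x =>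
    ⟨0, by rintro _ ⟨y, rfl⟩; exact hcnn x y⟩
  have hfnn : ∀ x, 0 ≤ ⨅ y : A, c x y := fun x => Real.iInf_nonneg fun y => hcnn x y
  have hfle : ∀ x, ∀ y ∈ A, (⨅ y : A, c x y) ≤ c x y := fun x y hy => ciInf_le (hbdd x) ⟨y, hy⟩
  have hc2 : ∀ x : X, Continuous fun y => c x y := fun x =>
    hc.comp (continuous_const.prodMk continuous_id)
  obtain ⟨s, hsA, hsct, hsd⟩ : ∃ s ⊆ A, s.Countable ∧ A ⊆ closure s := by
    obtain ⟨t, htc, htd⟩ := TopologicalSpace.exists_countable_dense ↥A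
    refine ⟨Subtype.val '' t, ?_, htc.image _, ?_⟩
    · rintro _ ⟨y, _, rfl⟩; exact y.2
    · intro y hy
      have h1 : (⟨y, hy⟩ : ↥A) ∈ closure t := htd _
      exact image_closure_subset_closure_image continuous_subtype_val ⟨⟨y, hy⟩, h1, rfl⟩
  have hsne : s.Nonempty := by
    rcases s.eq_empty_or_nonempty with h | h
    · obtain ⟨y, hy⟩ := hAne
      have h2 := hsd hy
      rw [h] at h2
      simp at h2
    · exact h
  haveI : Nonempty ↥s := hsne.to_subtype
  haveI : Countable ↥s := hsct.to_subtype
  have hbdds : ∀ x, BddBelow (Set.range fun z : s => c x z) := fun x =>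
    ⟨0, by rintro _ ⟨z, rfl⟩; exact hcnn x z⟩
  have hrepr : ∀ x, (⨅ y : A, c x y) = ⨅ z : s, c x z := by
    intro x
    apply le_antisymm
    · exact le_ciInf fun z => hfle x z (hsA z.2)
    · refine le_ciInf fun y => ?_
      refine le_of_forall_pos_le_add fun ε hε => ?_
      have hcont : ContinuousAt (fun z => c x z) (y : X) := (hc2 x).continuousAt
      have hnhds : (fun z => c x z) ⁻¹' (Iio (c x (y : X) + ε)) ∈ nhds (y : X) :=
        hcont (Iio_mem_nhds (lt_add_of_pos_right _ hε))
      obtain ⟨z, hz1, hz2⟩ := mem_closure_iff_nhds.1 (hsd y.2) _ hnhds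
      calc (⨅ z : s, c x z) ≤ c x z := ciInf_le (hbdds x) ⟨z, hz2⟩
        _ ≤ c x (y : X) + ε := le_of_lt hz1
  have hsm : ∀ z : s, Measurable fun x => ENNReal.ofReal (c x (z : X)) := fun z =>
    (ENNReal.continuous_ofReal.comp (hc.comp (continuous_id.prodMk continuous_const))).measurable
  have hmeasE : Measurable fun x => ⨅ z : s, ENNReal.ofReal (c x (z : X)) :=
    Measurable.iInf hsm
  have hofreal : ∀ x, ENNReal.ofReal (⨅ z : s, c x z) = ⨅ z : s, ENNReal.ofReal (c x (z : X)) :=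
    fun x =>
    Monotone.map_ciInf_of_continuousAt ENNReal.continuous_ofReal.continuousAt
      (fun _ _ h => ENNReal.ofReal_le_ofReal h) (hbdds x)
  have heq : (fun x => ⨅ y : A, c x y)
      = fun x => (⨅ z : s, ENNReal.ofReal (c x (z : X))).toReal := by
    funext x
    rw [← hofreal x, ENNReal.toReal_ofReal (by rw [← hrepr x]; exact hfnn x), hrepr x]
  rw [heq]
  exact ENNReal.measurable_toReal.comp hmeasE

private lemma maurey_bounded {X : Type*}
    [MeasurableSpace X] [TopologicalSpace X] [PolishSpace X] [BorelSpace X]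
    (c : X → X → ℝ)
    (μ : Measure X) [IsProbabilityMeasure μ]
    (hTCI : StrongTCI μ c)
    (A : Set X) (hA : MeasurableSet A) (hA0 : μ A ≠ 0)
    (g : X → ℝ) (hg : Measurable g) (B : ℝ)
    (hg0 : ∀ x, 0 ≤ g x) (hgB : ∀ x, g x ≤ B)
    (hgle : ∀ x y, y ∈ A → g x ≤ c x y) :
    (∫⁻ x, ENNReal.ofReal (Real.exp (g x)) ∂μ) * μ A ≤ 1 := by
  -- basic facts about the normalizing constant
  have hexpm : Measurable fun x => Real.exp (g x) := Real.continuous_exp.measurable.comp hg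
  have hgm : Measurable fun x => ENNReal.ofReal (Real.exp (g x)) :=
    ENNReal.measurable_ofReal.comp hexpm
  have hexpint : Integrable (fun x => Real.exp (g x)) μ :=
    integrable_of_bdd' hexpm (Real.exp B) fun x => by
      rw [abs_of_nonneg (Real.exp_pos _).le]; exact Real.exp_le_exp.2 (hgB x)
  set Zn := ∫⁻ x, ENNReal.ofReal (Real.exp (g x)) ∂μ with hZndef
  have hZn_eq : Zn = ENNReal.ofReal (∫ x, Real.exp (g x) ∂μ) :=
    (ofReal_integral_eq_lintegral_ofReal hexpint (ae_of_all _ fun x => (Real.exp_pos _).le)).symm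
  have hZnge1 : 1 ≤ Zn := by
    rw [hZndef]
    calc (1 : ℝ≥0∞) = ∫⁻ _, 1 ∂μ := by simp
      _ ≤ ∫⁻ x, ENNReal.ofReal (Real.exp (g x)) ∂μ :=
          lintegral_mono fun x => ENNReal.one_le_ofReal.2 (Real.one_le_exp (hg0 x))
  have hZn0 : Zn ≠ 0 := fun h => by simp [h] at hZnge1
  have hZntop : Zn ≠ ⊤ := by rw [hZn_eq]; exact ENNReal.ofReal_ne_top
  set Zt : ℝ := Zn.toReal with hZtdef
  have hZt_eq : Zt = ∫ x, Real.exp (g x) ∂μ := by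
    rw [hZtdef, hZn_eq, ENNReal.toReal_ofReal (integral_nonneg fun x => (Real.exp_pos _).le)]
  have hZt1 : (1:ℝ) ≤ Zt := by
    have h := ENNReal.toReal_mono hZntop hZnge1
    simpa using h
  have hZtpos : (0:ℝ) < Zt := lt_of_lt_of_le one_pos hZt1
  -- the conditioned measure β
  set β := μ[|A] with hβdef
  haveI hβprob : IsProbabilityMeasure β := cond_isProbabilityMeasure hA0
  set ρβ : X → ℝ≥0∞ := fun x => (μ A)⁻¹ * A.indicator 1 x with hρβdef
  have hρβm : Measurable ρβ := (measurable_one.indicator hA).const_mul _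
  have hβeq : β = μ.withDensity ρβ := by
    have h1 : μ.restrict A = μ.withDensity (A.indicator 1) := (withDensity_indicator_one hA).symm
    have h2 : β = (μ A)⁻¹ • μ.restrict A := rfl
    rw [h2, h1, ← withDensity_smul _ (measurable_one.indicator hA)]
    congr 1
  have hβAc : β Aᶜ = 0 := by
    rw [hβdef, cond_apply hA, Set.inter_compl_self, measure_empty, mul_zero]
  have hβac : β ≪ μ := hβeq ▸ withDensity_absolutelyContinuous μ ρβ
  have hrnβ : β.rnDeriv μ =ᵐ[μ] ρβ := hβeq ▸ Measure.rnDeriv_withDensity μ hρβm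
  have hβinA : ∀ᵐ x ∂β, x ∈ A := by
    rw [ae_iff]
    have h : {x | ¬ x ∈ A} = Aᶜ := rfl
    rw [h, hβAc]
  set M : ℝ := Real.log (μ A).toReal with hMdef
  have hμApos : 0 < (μ A).toReal := ENNReal.toReal_pos hA0 (measure_ne_top μ A)
  have hμAle1 : (μ A).toReal ≤ 1 := by
    have h := ENNReal.toReal_mono (by simp : (1:ℝ≥0∞) ≠ ⊤) (prob_le_one (μ := μ) (s := A))
    simpa using h
  have hM0 : M ≤ 0 := Real.log_nonpos hμApos.le hμAle1
  have hllrβ : llr β μ =ᵐ[β] fun _ => -M := by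
    filter_upwards [hβac.ae_eq hrnβ, hβinA] with x hx hxA
    simp only [llr_def]
    rw [hx]
    show Real.log (((μ A)⁻¹ * A.indicator 1 x).toReal) = -M
    rw [Set.indicator_of_mem hxA, Pi.one_apply, mul_one, ENNReal.toReal_inv, Real.log_inv, hMdef]
  have hHβ : relEntropy β μ = ENNReal.ofReal (-M) := by
    have hint : Integrable (llr β μ) β := (integrable_const (-M)).congr hllrβ.symm
    rw [relEntropy, if_pos ⟨hβac, hint⟩, integral_congr_ae hllrβ, integral_const]
    simp
  -- the tilted measure ν
  set ρ : X → ℝ≥0∞ := fun x => Zn⁻¹ * ENNReal.ofReal (Real.exp (g x)) with hρdef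
  have hρm : Measurable ρ := hgm.const_mul _
  set ν := μ.withDensity ρ with hνdef
  haveI hνprob : IsProbabilityMeasure ν := by
    constructor
    rw [hνdef, withDensity_apply _ MeasurableSet.univ, Measure.restrict_univ]
    show ∫⁻ x, Zn⁻¹ * ENNReal.ofReal (Real.exp (g x)) ∂μ = 1
    rw [lintegral_const_mul _ hgm, ← hZndef]
    exact ENNReal.inv_mul_cancel hZn0 hZntop
  have hνac : ν ≪ μ := hνdef ▸ withDensity_absolutelyContinuous μ ρ
  have hrnν : ν.rnDeriv μ =ᵐ[μ] ρ := hνdef ▸ Measure.rnDeriv_withDensity μ hρm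
  set L : ℝ := Real.log Zt with hLdef
  have hllrν : llr ν μ =ᵐ[ν] fun x => g x - L := by
    filter_upwards [hνac.ae_eq hrnν] with x hx
    simp only [llr_def]
    rw [hx]
    show Real.log ((Zn⁻¹ * ENNReal.ofReal (Real.exp (g x))).toReal) = g x - L
    rw [ENNReal.toReal_mul, ENNReal.toReal_inv, ENNReal.toReal_ofReal (Real.exp_pos _).le,
      ← hZtdef, Real.log_mul (inv_ne_zero hZtpos.ne') (Real.exp_pos _).ne',
      Real.log_inv, Real.log_exp, ← hLdef]
    ring
  have hgint : Integrable g ν := integrable_of_bdd' hg B fun x => by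
    rw [abs_of_nonneg (hg0 x)]; exact hgB x
  set a : ℝ := ∫ x, g x ∂ν with hadef
  have hHν : relEntropy ν μ = ENNReal.ofReal (a - L) := by
    have h1 : Integrable (fun x => g x - L) ν := hgint.sub (integrable_const L)
    have hint : Integrable (llr ν μ) ν := h1.congr hllrν.symm
    rw [relEntropy, if_pos ⟨hνac, hint⟩, integral_congr_ae hllrν,
      integral_sub hgint (integrable_const L), integral_const]
    simp [hadef]
  -- lower bound for the transport cost
  have hlow : ENNReal.ofReal a ≤ transportCost c ν β := by
    unfold transportCost
    refine le_iInf fun π => le_iInf fun h1 => le_iInf fun h2 => ?_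
    have hsnd : ∀ᵐ p ∂π, p.2 ∈ A := by
      rw [ae_iff]
      have h : {p : X × X | ¬ p.2 ∈ A} = Prod.snd ⁻¹' Aᶜ := rfl
      rw [h, ← Measure.map_apply measurable_snd hA.compl, h2, hβAc]
    have step1 : ∫⁻ x, ENNReal.ofReal (g x) ∂ν ≤ ∫⁻ p, ENNReal.ofReal (c p.1 p.2) ∂π := by
      rw [← h1, lintegral_map hg.ennreal_ofReal measurable_fst]
      refine lintegral_mono_ae ?_
      filter_upwards [hsnd] with p hp
      exact ENNReal.ofReal_le_ofReal (hgle p.1 p.2 hp)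
    refine le_trans (le_of_eq ?_) step1
    rw [hadef]
    exact ofReal_integral_eq_lintegral_ofReal hgint (ae_of_all _ hg0)
  -- Gibbs' inequality : L ≤ a
  have hexpgint : Integrable (fun x => Real.exp (g x) * g x) μ :=
    integrable_of_bdd' (hexpm.mul hg) (Real.exp B * B) fun x => by
      rw [abs_of_nonneg (mul_nonneg (Real.exp_pos _).le (hg0 x))]
      exact mul_le_mul (Real.exp_le_exp.2 (hgB x)) (hgB x) (hg0 x) (Real.exp_pos _).le
  have haE : ENNReal.ofReal a = Zn⁻¹ * ENNReal.ofReal (∫ x, Real.exp (g x) * g x ∂μ) := by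
    rw [hadef, ofReal_integral_eq_lintegral_ofReal hgint (ae_of_all _ hg0), hνdef,
      lintegral_withDensity_eq_lintegral_mul μ hρm hg.ennreal_ofReal]
    have h : ∀ x, (ρ * fun x => ENNReal.ofReal (g x)) x
        = Zn⁻¹ * (ENNReal.ofReal (Real.exp (g x)) * ENNReal.ofReal (g x)) := by
      intro x
      show ρ x * ENNReal.ofReal (g x) = _
      rw [hρdef, mul_assoc]
    rw [lintegral_congr h, lintegral_const_mul _ (f := fun x => ENNReal.ofReal (Real.exp (g x)) * ENNReal.ofReal (g x)) (hgm.mul hg.ennreal_ofReal)]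
    congr 1
    rw [ofReal_integral_eq_lintegral_ofReal hexpgint
      (ae_of_all _ fun x => mul_nonneg (Real.exp_pos _).le (hg0 x))]
    exact lintegral_congr fun x => (ENNReal.ofReal_mul (Real.exp_pos _).le).symm
  have ha0 : 0 ≤ a := by rw [hadef]; exact integral_nonneg hg0
  have haval : Zt * a = ∫ x, Real.exp (g x) * g x ∂μ := by
    have h := congrArg ENNReal.toReal haE
    rw [ENNReal.toReal_ofReal ha0, ENNReal.toReal_mul, ENNReal.toReal_inv, ← hZtdef,
      ENNReal.toReal_ofReal (integral_nonneg fun x =>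
        mul_nonneg (Real.exp_pos _).le (hg0 x))] at h
    field_simp at h
    linarith [h]
  have hLa : L ≤ a := by
    have hi1 : Integrable (fun x => Real.exp (g x) * L) μ := hexpint.mul_const L
    have hic : Integrable (fun _ : X => Real.exp L) μ := integrable_const _
    have hi2 : Integrable (fun x => Real.exp (g x) - Real.exp L) μ := hexpint.sub hic
    have hint1 : Integrable (fun x => Real.exp (g x) * L + (Real.exp (g x) - Real.exp L)) μ :=
      hi1.add hi2
    have h2 : ∫ x, (Real.exp (g x) * L + (Real.exp (g x) - Real.exp L)) ∂μ
        ≤ ∫ x, Real.exp (g x) * g x ∂μ :=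
      integral_mono hint1 hexpgint fun x => key_ineq' (g x) L
    rw [integral_add hi1 hi2, integral_mul_const, integral_sub hexpint hic, integral_const,
      ← hZt_eq, ← haval] at h2
    have hexpL : Real.exp L = Zt := by rw [hLdef, Real.exp_log hZtpos]
    rw [hexpL] at h2
    have h3 : Zt * L ≤ Zt * a := by
      have hμu : (μ.real Set.univ : ℝ) = 1 := by simp
      rw [hμu, one_smul] at h2
      linarith [h2]
    exact le_of_mul_le_mul_left h3 hZtpos
  -- apply the strong TCI
  have hTCIn := hTCI ν β hνprob hβprob
  rw [hHν, hHβ] at hTCIn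
  have hchain := hlow.trans hTCIn
  rw [← ENNReal.ofReal_add (by linarith) (by linarith)] at hchain
  have hfin : a ≤ a - L + -M := (ENNReal.ofReal_le_ofReal_iff (by linarith)).1 hchain
  have hLM : L ≤ -M := by linarith
  -- conclude
  have hZtle : Zt ≤ ((μ A).toReal)⁻¹ := by
    have h := Real.exp_le_exp.2 hLM
    rw [hLdef, Real.exp_log hZtpos, Real.exp_neg, hMdef, Real.exp_log hμApos] at h
    exact h
  have hmul : Zt * (μ A).toReal ≤ 1 := by
    calc Zt * (μ A).toReal ≤ ((μ A).toReal)⁻¹ * (μ A).toReal :=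
          mul_le_mul_of_nonneg_right hZtle ENNReal.toReal_nonneg
      _ = 1 := inv_mul_cancel₀ hμApos.ne'
  have heq : Zn * μ A = ENNReal.ofReal (Zt * (μ A).toReal) := by
    rw [ENNReal.ofReal_mul hZtpos.le, hZtdef, ENNReal.ofReal_toReal hZntop,
      ENNReal.ofReal_toReal (measure_ne_top μ A)]
  rw [heq, ← ENNReal.ofReal_one]
  exact ENNReal.ofReal_le_ofReal hmul

/-- Integrability property deduced from a strong TCI (Maurey). -/
theorem stmt11 {X : Type*}
    [MeasurableSpace X] [TopologicalSpace X] [PolishSpace X] [BorelSpace X]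
    (c : X → X → ℝ) (hcnn : ∀ x y, 0 ≤ c x y)
    (hc : Continuous fun p : X × X => c p.1 p.2)
    (μ : Measure X) [IsProbabilityMeasure μ]
    (hTCI : StrongTCI μ c)
    (A : Set X) (hA : MeasurableSet A) :
    (∫⁻ x, ENNReal.ofReal (Real.exp (⨅ y : A, c x y)) ∂μ) * μ A ≤ 1 := by
  by_cases hA0 : μ A = 0
  · rw [hA0, mul_zero]; exact zero_le_one
  have hAne : A.Nonempty := Set.nonempty_iff_ne_empty.2 (by rintro rfl; simp at hA0)
  haveI : Nonempty ↥A := hAne.to_subtype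
  have hbdd : ∀ x, BddBelow (Set.range fun y : A => c x y) := fun x =>
    ⟨0, by rintro _ ⟨y, rfl⟩; exact hcnn x y⟩
  have hfnn : ∀ x, 0 ≤ ⨅ y : A, c x y := fun x => Real.iInf_nonneg fun y => hcnn x y
  have hfle : ∀ x, ∀ y ∈ A, (⨅ y : A, c x y) ≤ c x y := fun x y hy => ciInf_le (hbdd x) ⟨y, hy⟩
  have hf : Measurable fun x => ⨅ y : A, c x y := measurable_infDist_aux11 c hcnn hc A hAne
  -- truncations
  have hcnm : ∀ n : ℕ, Measurable fun x => min (⨅ y : A, c x y) (n : ℝ) := fun n =>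
    hf.min measurable_const
  have key : ∀ n : ℕ,
      (∫⁻ x, ENNReal.ofReal (Real.exp (min (⨅ y : A, c x y) (n : ℝ))) ∂μ) * μ A ≤ 1 := by
    intro n
    refine maurey_bounded c μ hTCI A hA hA0 _ (hcnm n) (n : ℝ)
      (fun x => le_min (hfnn x) (Nat.cast_nonneg n)) (fun x => min_le_right _ _) ?_
    intro x y hy
    exact (min_le_left _ _).trans (hfle x y hy)
  -- monotone convergence
  have hmono : Monotone fun n : ℕ =>
      fun x => ENNReal.ofReal (Real.exp (min (⨅ y : A, c x y) (n : ℝ))) := by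
    intro n m hnm x
    exact ENNReal.ofReal_le_ofReal (Real.exp_le_exp.2 (min_le_min le_rfl (Nat.cast_le.2 hnm)))
  have hMCT : ∫⁻ x, ENNReal.ofReal (Real.exp (⨅ y : A, c x y)) ∂μ
      = ⨆ n : ℕ, ∫⁻ x, ENNReal.ofReal (Real.exp (min (⨅ y : A, c x y) (n : ℝ))) ∂μ := by
    rw [← lintegral_iSup (fun n => ((hcnm n).exp).ennreal_ofReal) hmono]
    refine lintegral_congr fun x => ?_
    apply le_antisymm
    · refine le_iSup_of_le ⌈(⨅ y : A, c x y)⌉₊ (le_of_eq ?_)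
      rw [min_eq_left (Nat.le_ceil _)]
    · exact iSup_le fun n =>
        ENNReal.ofReal_le_ofReal (Real.exp_le_exp.2 (min_le_left _ _))
  rw [hMCT, ENNReal.iSup_mul]
  exact iSup_le key

end
end

section
/- Let X be a Polish space, c : X × X → [0,∞) a continuous cost function with c(x,x) = 0 for all x, and μ a probability measure on X satisfying the strong TCI with cost c. Then for every n ∈ ℕ*, every measurable A ⊆ Xⁿ with μⁿ(A) > 0, and every r ≥ 0: μⁿ(A_c^r) ≥ 1 − e^{−r}/μⁿ(A), where μⁿ is the n-fold product measure and A_c^r = {x ∈ Xⁿ : ∃y ∈ A with Σ_{i=1}^n c(x_i, y_i) ≤ r}. -/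
open MeasureTheory ProbabilityTheory Filter Set ENNReal

noncomputable section

def DualIneq {Y : Type*} [MeasurableSpace Y] (μ : Measure Y) (c : Y → Y → ℝ) : Prop :=
  ∀ f g : Y → ℝ, Measurable f → Measurable g →
    (∃ M, ∀ x, |f x| ≤ M) → (∃ M, ∀ x, |g x| ≤ M) →
    (∀ x y, f x + g y ≤ c x y) →
    (∫⁻ x, ENNReal.ofReal (Real.exp (f x)) ∂μ) *
      (∫⁻ x, ENNReal.ofReal (Real.exp (g x)) ∂μ) ≤ 1

section Base
variable {X : Type*} [MeasurableSpace X] {μ : Measure X} [IsProbabilityMeasure μ]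

/-- Bounded measurable functions are integrable against a probability measure. -/
lemma integrable_of_bdd {f : X → ℝ} (hf : Measurable f) {M : ℝ} (hM : ∀ x, |f x| ≤ M) :
    Integrable f μ :=
  Integrable.mono' (integrable_const M) hf.aestronglyMeasurable (ae_of_all _ hM)

/-- Data for the Gibbs measure associated to a bounded measurable `f`. -/
lemma gibbs_facts {f : X → ℝ} (hf : Measurable f) {M : ℝ} (hM : ∀ x, |f x| ≤ M) :
    let Z := ∫ x, Real.exp (f x) ∂μ
    let ν := μ.withDensity fun x => ENNReal.ofReal (Real.exp (f x) / Z)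
    0 < Z ∧ IsProbabilityMeasure ν ∧
      relEntropy ν μ = ENNReal.ofReal ((∫ x, f x ∂ν) - Real.log Z) ∧
      Real.log Z ≤ ∫ x, f x ∂ν ∧
      (∫⁻ x, ENNReal.ofReal (Real.exp (f x)) ∂μ) = ENNReal.ofReal Z := by
  intro Z ν
  have hint : Integrable (fun x => Real.exp (f x)) μ :=
    integrable_of_bdd (Real.measurable_exp.comp hf) (M := Real.exp M)
      (fun x => by
        rw [abs_of_nonneg (Real.exp_nonneg _)]
        exact Real.exp_le_exp.2 ((abs_le.1 (hM x)).2))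
  have hZpos : 0 < Z := by
    have : (0:ℝ) < Real.exp (-M) := Real.exp_pos _
    calc (0:ℝ) < ∫ _x, Real.exp (-M) ∂μ := by simp [this]
      _ ≤ Z := integral_mono (integrable_const _) hint
        (fun x => Real.exp_le_exp.2 (neg_le_of_abs_le (hM x)))
  set ρ : X → NNReal := fun x => Real.toNNReal (Real.exp (f x) / Z) with hρ
  have hρm : Measurable ρ := ((Real.measurable_exp.comp hf).div_const Z).real_toNNReal
  have hνdef : ν = μ.withDensity fun x => ((ρ x : NNReal) : ℝ≥0∞) := rfl
  have hd : Measurable fun x => ENNReal.ofReal (Real.exp (f x) / Z) :=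
    ENNReal.measurable_ofReal.comp ((Real.measurable_exp.comp hf).div_const Z)
  have hintZ : Integrable (fun x => Real.exp (f x) / Z) μ := hint.div_const Z
  have hnn : 0 ≤ᵐ[μ] fun x => Real.exp (f x) / Z :=
    ae_of_all _ fun x => div_nonneg (Real.exp_nonneg _) hZpos.le
  have hZint : ∫ x, Real.exp (f x) / Z ∂μ = 1 := by
    rw [integral_div]
    exact div_self hZpos.ne'
  have hprob : IsProbabilityMeasure ν := by
    constructor
    rw [show ν = μ.withDensity (fun x => ENNReal.ofReal (Real.exp (f x) / Z)) from rfl,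
      withDensity_apply _ MeasurableSet.univ, setLIntegral_univ,
      ← ofReal_integral_eq_lintegral_ofReal hintZ hnn, hZint, ENNReal.ofReal_one]
  have hac : ν ≪ μ := withDensity_absolutelyContinuous μ _
  have hrn : ν.rnDeriv μ =ᵐ[μ] fun x => ENNReal.ofReal (Real.exp (f x) / Z) :=
    Measure.rnDeriv_withDensity μ hd
  have hllr_mu : llr ν μ =ᵐ[μ] fun x => f x - Real.log Z := by
    filter_upwards [hrn] with x hx
    show Real.log (ν.rnDeriv μ x).toReal = _
    rw [hx, ENNReal.toReal_ofReal (div_nonneg (Real.exp_nonneg _) hZpos.le),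
      Real.log_div (Real.exp_ne_zero _) hZpos.ne', Real.log_exp]
  have hllr_nu : llr ν μ =ᵐ[ν] fun x => f x - Real.log Z := hac.ae_le hllr_mu
  have hfint : Integrable f ν := by
    have := hprob
    exact integrable_of_bdd hf hM
  have hllr_int : Integrable (llr ν μ) ν := by
    have := hprob
    exact (Integrable.congr (hfint.sub (integrable_const (Real.log Z))) hllr_nu.symm)
  have hval : ∫ x, llr ν μ x ∂ν = (∫ x, f x ∂ν) - Real.log Z := by
    have := hprob
    rw [integral_congr_ae hllr_nu,
      integral_sub hfint (integrable_const _), integral_const]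
    simp
  have hrel : relEntropy ν μ = ENNReal.ofReal ((∫ x, f x ∂ν) - Real.log Z) := by
    rw [relEntropy, if_pos ⟨hac, hllr_int⟩, hval]
  -- entropy is nonnegative: `log Z ≤ ∫ f dν`
  have hent : Real.log Z ≤ ∫ x, f x ∂ν := by
    have := hprob
    have hone : ∫ x, Real.exp (Real.log Z - f x) ∂ν = 1 := by
      rw [hνdef, integral_withDensity_eq_integral_smul hρm]
      have : ∀ x, ρ x • Real.exp (Real.log Z - f x) = 1 := by
        intro x
        rw [NNReal.smul_def, Real.coe_toNNReal _ (div_nonneg (Real.exp_nonneg _) hZpos.le),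
          Real.exp_sub, Real.exp_log hZpos]
        field_simp
        rw [smul_eq_mul, div_mul_div_comm, mul_comm Z, div_self (mul_pos (Real.exp_pos _) hZpos).ne']
      simp_rw [this]
      simp
    have hexpint : Integrable (fun x => Real.exp (Real.log Z - f x)) ν :=
      integrable_of_bdd (Real.measurable_exp.comp (measurable_const.sub hf))
        (M := Real.exp (|Real.log Z| + M)) fun x => by
          rw [abs_of_nonneg (Real.exp_nonneg _)]
          refine Real.exp_le_exp.2 ?_
          have h1 := le_abs_self (Real.log Z)
          have h2 := neg_le_of_abs_le (hM x)
          linarith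
    have hsubint : Integrable (fun x => Real.log Z - f x + 1) ν :=
      ((integrable_const (Real.log Z)).sub hfint).add (integrable_const 1)
    have hmono : ∫ x, (Real.log Z - f x + 1) ∂ν ≤ ∫ x, Real.exp (Real.log Z - f x) ∂ν :=
      integral_mono hsubint hexpint fun x => by
        have := Real.add_one_le_exp (Real.log Z - f x)
        linarith
    rw [hone] at hmono
    have h3 : ∫ x, (Real.log Z - f x + 1) ∂ν = Real.log Z - ∫ x, f x ∂ν + 1 := by
      have e1 : Integrable (fun x => Real.log Z - f x) ν := (integrable_const _).sub hfint
      rw [integral_add (f := fun x => Real.log Z - f x) (g := fun _ => (1:ℝ)) e1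
        (integrable_const 1),
        integral_sub (f := fun _ => Real.log Z) (g := f) (integrable_const _) hfint,
        integral_const, integral_const]
      simp
    rw [h3] at hmono
    linarith
  exact ⟨hZpos, hprob, hrel, hent,
    (ofReal_integral_eq_lintegral_ofReal hint (ae_of_all _ fun x => Real.exp_nonneg _)).symm⟩

lemma ofReal_integral_le' {α : Type*} [MeasurableSpace α] {π : Measure α} {h : α → ℝ}
    (hi : Integrable h π) :
    ENNReal.ofReal (∫ x, h x ∂π) ≤ ∫⁻ x, ENNReal.ofReal (h x) ∂π := by
  calc ENNReal.ofReal (∫ x, h x ∂π)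
      ≤ ENNReal.ofReal (∫ x, max (h x) 0 ∂π) :=
        ENNReal.ofReal_le_ofReal (integral_mono hi hi.pos_part fun x => le_max_left _ _)
    _ = ∫⁻ x, ENNReal.ofReal (max (h x) 0) ∂π :=
        ofReal_integral_eq_lintegral_ofReal hi.pos_part (ae_of_all _ fun x => le_max_right _ _)
    _ = ∫⁻ x, ENNReal.ofReal (h x) ∂π := by
        congr 1 with x
        rcases le_total (h x) 0 with h0 | h0
        · rw [max_eq_right h0, ENNReal.ofReal_of_nonpos h0, ENNReal.ofReal_zero]
        · rw [max_eq_left h0]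

theorem DualIneq.of_strongTCI {c : X → X → ℝ} (hTCI : StrongTCI μ c) : DualIneq μ c := by
  intro f g hf hg hbf hbg hfg
  obtain ⟨M, hM⟩ := hbf
  obtain ⟨N, hN⟩ := hbg
  obtain ⟨hZf, hprobf, hrelf, hentf, hlinf⟩ := gibbs_facts (μ := μ) hf hM
  obtain ⟨hZg, hprobg, hrelg, hentg, hling⟩ := gibbs_facts (μ := μ) hg hN
  set Zf := ∫ x, Real.exp (f x) ∂μ with hZfdef
  set Zg := ∫ x, Real.exp (g x) ∂μ with hZgdef
  set ν := μ.withDensity fun x => ENNReal.ofReal (Real.exp (f x) / Zf) with hνdef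
  set β := μ.withDensity fun x => ENNReal.ofReal (Real.exp (g x) / Zg) with hβdef
  haveI := hprobf
  haveI := hprobg
  set Sf := ∫ x, f x ∂ν with hSf
  set Sg := ∫ x, g x ∂β with hSg
  have hT : ENNReal.ofReal (Sf + Sg) ≤ transportCost c ν β := by
    refine le_iInf fun π => le_iInf fun hπ1 => le_iInf fun hπ2 => ?_
    haveI : IsProbabilityMeasure π := by
      constructor
      have h1 := Measure.map_apply (f := Prod.fst) (μ := π) measurable_fst MeasurableSet.univ
      rw [hπ1, measure_univ, preimage_univ] at h1
      exact h1.symm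
    have hint1 : Integrable (fun p : X × X => f p.1) π :=
      integrable_of_bdd (hf.comp measurable_fst) (fun p => hM p.1)
    have hint2 : Integrable (fun p : X × X => g p.2) π :=
      integrable_of_bdd (hg.comp measurable_snd) (fun p => hN p.2)
    have heq : ∫ p, (f p.1 + g p.2) ∂π = Sf + Sg := by
      rw [integral_add hint1 hint2]
      congr 1
      · rw [hSf, ← hπ1, integral_map measurable_fst.aemeasurable hf.aestronglyMeasurable]
      · rw [hSg, ← hπ2, integral_map measurable_snd.aemeasurable hg.aestronglyMeasurable]
    calc ENNReal.ofReal (Sf + Sg)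
        = ENNReal.ofReal (∫ p, (f p.1 + g p.2) ∂π) := by rw [heq]
      _ ≤ ∫⁻ p, ENNReal.ofReal (f p.1 + g p.2) ∂π := ofReal_integral_le' (hint1.add hint2)
      _ ≤ ∫⁻ p, ENNReal.ofReal (c p.1 p.2) ∂π :=
          lintegral_mono fun p => ENNReal.ofReal_le_ofReal (hfg p.1 p.2)
  have hcomb := (hT.trans (hTCI ν β hprobf hprobg))
  rw [hrelf, hrelg] at hcomb
  have hHf : 0 ≤ Sf - Real.log Zf := by linarith
  have hHg : 0 ≤ Sg - Real.log Zg := by linarith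
  rw [← ENNReal.ofReal_add hHf hHg] at hcomb
  have hreal : Sf + Sg ≤ Sf - Real.log Zf + (Sg - Real.log Zg) :=
    (ENNReal.ofReal_le_ofReal_iff (by linarith)).1 hcomb
  have hlog : Real.log Zf + Real.log Zg ≤ 0 := by linarith
  rw [hlinf, hling, ← ENNReal.ofReal_mul hZf.le]
  calc ENNReal.ofReal (Zf * Zg)
      = ENNReal.ofReal (Real.exp (Real.log Zf + Real.log Zg)) := by
        rw [Real.exp_add, Real.exp_log hZf, Real.exp_log hZg]
    _ ≤ ENNReal.ofReal (Real.exp 0) := ENNReal.ofReal_le_ofReal (Real.exp_le_exp.2 hlog)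
    _ = 1 := by simp
end Base

theorem DualIneq.transfer {Y Z : Type*} [MeasurableSpace Y] [MeasurableSpace Z]
    {ν : Measure Y} {μ : Measure Z} {cZ : Z → Z → ℝ} (e : Y ≃ᵐ Z)
    (he : MeasurePreserving e ν μ) (h : DualIneq μ cZ) :
    DualIneq ν (fun a b => cZ (e a) (e b)) := by
  intro f g hf hg hbf hbg hfg
  have h1 : ∀ (u : Y → ℝ), Measurable u →
      ∫⁻ x, ENNReal.ofReal (Real.exp (u (e.symm x))) ∂μ
        = ∫⁻ x, ENNReal.ofReal (Real.exp (u x)) ∂ν := by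
    intro u hu
    rw [← he.map_eq, lintegral_map (by measurability) e.measurable]
    simp
  have := h (f ∘ e.symm) (g ∘ e.symm) (hf.comp e.symm.measurable) (hg.comp e.symm.measurable)
    (hbf.imp fun M hM x => hM _) (hbg.imp fun M hM x => hM _)
    (fun x y => by simpa using hfg (e.symm x) (e.symm y))
  simpa [Function.comp, h1 f hf, h1 g hg] using this

theorem DualIneq.prod {Y Z : Type*} [MeasurableSpace Y] [MeasurableSpace Z]
    {μ₁ : Measure Y} {μ₂ : Measure Z} [IsProbabilityMeasure μ₁] [IsProbabilityMeasure μ₂]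
    {c₁ : Y → Y → ℝ} {c₂ : Z → Z → ℝ}
    (h₁ : DualIneq μ₁ c₁) (h₂ : DualIneq μ₂ c₂) :
    DualIneq (μ₁.prod μ₂) (fun p q => c₁ p.1 q.1 + c₂ p.2 q.2) := by
  intro f g hf hg hbf hbg hfg
  obtain ⟨M, hM⟩ := hbf
  obtain ⟨N, hN⟩ := hbg
  set If : Y → ℝ≥0∞ := fun y => ∫⁻ z, ENNReal.ofReal (Real.exp (f (y, z))) ∂μ₂ with hIf
  set Ig : Y → ℝ≥0∞ := fun y => ∫⁻ z, ENNReal.ofReal (Real.exp (g (y, z))) ∂μ₂ with hIg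
  have hIfm : Measurable If := Measurable.lintegral_prod_right
    (ENNReal.measurable_ofReal.comp (Real.measurable_exp.comp hf))
  have hIgm : Measurable Ig := Measurable.lintegral_prod_right
    (ENNReal.measurable_ofReal.comp (Real.measurable_exp.comp hg))
  -- bounds
  have hIub : ∀ {h : Y × Z → ℝ} (C : ℝ), (∀ x, |h x| ≤ C) → ∀ y,
      (∫⁻ z, ENNReal.ofReal (Real.exp (h (y, z))) ∂μ₂) ≤ ENNReal.ofReal (Real.exp C) := by
    intro h C hC y
    calc ∫⁻ z, ENNReal.ofReal (Real.exp (h (y, z))) ∂μ₂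
        ≤ ∫⁻ _, ENNReal.ofReal (Real.exp C) ∂μ₂ := by
          refine lintegral_mono fun z => ENNReal.ofReal_le_ofReal ?_
          exact Real.exp_le_exp.2 ((abs_le.1 (hC (y, z))).2)
      _ = ENNReal.ofReal (Real.exp C) := by simp
  have hIlb : ∀ {h : Y × Z → ℝ} (C : ℝ), (∀ x, |h x| ≤ C) → ∀ y,
      ENNReal.ofReal (Real.exp (-C)) ≤ ∫⁻ z, ENNReal.ofReal (Real.exp (h (y, z))) ∂μ₂ := by
    intro h C hC y
    calc ENNReal.ofReal (Real.exp (-C))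
        = ∫⁻ _, ENNReal.ofReal (Real.exp (-C)) ∂μ₂ := by simp
      _ ≤ _ := by
          refine lintegral_mono fun z => ENNReal.ofReal_le_ofReal ?_
          exact Real.exp_le_exp.2 (neg_le_of_abs_le (hC (y, z)))
  have hIf_ub : ∀ y, If y ≤ ENNReal.ofReal (Real.exp M) := hIub M hM
  have hIf_lb : ∀ y, ENNReal.ofReal (Real.exp (-M)) ≤ If y := hIlb M hM
  have hIg_ub : ∀ y, Ig y ≤ ENNReal.ofReal (Real.exp N) := hIub N hN
  have hIg_lb : ∀ y, ENNReal.ofReal (Real.exp (-N)) ≤ Ig y := hIlb N hN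
  have hIf_ne : ∀ y, If y ≠ ∞ := fun y => ((hIf_ub y).trans_lt ofReal_lt_top).ne
  have hIg_ne : ∀ y, Ig y ≠ ∞ := fun y => ((hIg_ub y).trans_lt ofReal_lt_top).ne
  have hIf_pos : ∀ y, 0 < (If y).toReal := by
    intro y
    have : Real.exp (-M) ≤ (If y).toReal := by
      have := ENNReal.toReal_mono (hIf_ne y) (hIf_lb y)
      rwa [ENNReal.toReal_ofReal (Real.exp_nonneg _)] at this
    linarith [Real.exp_pos (-M)]
  have hIg_pos : ∀ y, 0 < (Ig y).toReal := by
    intro y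
    have : Real.exp (-N) ≤ (Ig y).toReal := by
      have := ENNReal.toReal_mono (hIg_ne y) (hIg_lb y)
      rwa [ENNReal.toReal_ofReal (Real.exp_nonneg _)] at this
    linarith [Real.exp_pos (-N)]
  set F : Y → ℝ := fun y => Real.log (If y).toReal with hF
  set G : Y → ℝ := fun y => Real.log (Ig y).toReal with hG
  have hexpF : ∀ y, Real.exp (F y) = (If y).toReal := fun y => Real.exp_log (hIf_pos y)
  have hexpG : ∀ y, Real.exp (G y) = (Ig y).toReal := fun y => Real.exp_log (hIg_pos y)
  -- the key pointwise inequality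
  have hkey : ∀ y₁ y₂ : Y, F y₁ + G y₂ ≤ c₁ y₁ y₂ := by
    intro y₁ y₂
    have hdual := h₂ (fun z => f (y₁, z) - c₁ y₁ y₂) (fun z => g (y₂, z))
      ((hf.comp measurable_prodMk_left).sub measurable_const)
      (hg.comp measurable_prodMk_left)
      ⟨M + |c₁ y₁ y₂|, fun z => (abs_sub (f (y₁, z)) (c₁ y₁ y₂)).trans
        (add_le_add (hM _) le_rfl)⟩
      ⟨N, fun z => hN _⟩
      (fun z z' => by have := hfg (y₁, z) (y₂, z'); simp at this ⊢; linarith)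
    have hm2 : Measurable fun z => ENNReal.ofReal (Real.exp (f (y₁, z))) :=
      ENNReal.measurable_ofReal.comp (Real.measurable_exp.comp (hf.comp measurable_prodMk_left))
    have hconv : (∫⁻ z, ENNReal.ofReal (Real.exp (f (y₁, z) - c₁ y₁ y₂)) ∂μ₂)
        = ENNReal.ofReal (Real.exp (-c₁ y₁ y₂)) * If y₁ := by
      calc (∫⁻ z, ENNReal.ofReal (Real.exp (f (y₁, z) - c₁ y₁ y₂)) ∂μ₂)
          = ∫⁻ z, ENNReal.ofReal (Real.exp (-c₁ y₁ y₂))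
              * ENNReal.ofReal (Real.exp (f (y₁, z))) ∂μ₂ := by
            congr 1 with z
            rw [sub_eq_neg_add, Real.exp_add, ENNReal.ofReal_mul (Real.exp_nonneg _)]
        _ = ENNReal.ofReal (Real.exp (-c₁ y₁ y₂)) * If y₁ := lintegral_const_mul _ hm2
    rw [hconv] at hdual
    have hmul : If y₁ * Ig y₂ ≤ ENNReal.ofReal (Real.exp (c₁ y₁ y₂)) := by
      have hrw : ENNReal.ofReal (Real.exp (c₁ y₁ y₂))
          = (ENNReal.ofReal (Real.exp (-c₁ y₁ y₂)))⁻¹ := by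
        rw [← ENNReal.ofReal_inv_of_pos (Real.exp_pos _), Real.exp_neg, inv_inv]
      rw [hrw, ENNReal.le_inv_iff_mul_le]
      calc If y₁ * Ig y₂ * ENNReal.ofReal (Real.exp (-c₁ y₁ y₂))
          = ENNReal.ofReal (Real.exp (-c₁ y₁ y₂)) * If y₁ * Ig y₂ := by ring
        _ ≤ 1 := hdual
    have htr : (If y₁).toReal * (Ig y₂).toReal ≤ Real.exp (c₁ y₁ y₂) := by
      have := ENNReal.toReal_mono ofReal_ne_top hmul
      rwa [ENNReal.toReal_mul, ENNReal.toReal_ofReal (Real.exp_nonneg _)] at this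
    have : Real.log ((If y₁).toReal * (Ig y₂).toReal) ≤ c₁ y₁ y₂ := by
      rw [Real.log_le_iff_le_exp (mul_pos (hIf_pos y₁) (hIg_pos y₂))]
      exact htr
    rwa [Real.log_mul (hIf_pos y₁).ne' (hIg_pos y₂).ne'] at this
  have hFm : Measurable F := (Real.measurable_log.comp hIfm.ennreal_toReal)
  have hGm : Measurable G := (Real.measurable_log.comp hIgm.ennreal_toReal)
  have hbnd : ∀ (I : Y → ℝ≥0∞) (C : ℝ), (∀ y, ENNReal.ofReal (Real.exp (-C)) ≤ I y) →
      (∀ y, I y ≤ ENNReal.ofReal (Real.exp C)) → ∀ y, |Real.log (I y).toReal| ≤ |C| := by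
    intro I C hlb hub y
    have hne : I y ≠ ∞ := ((hub y).trans_lt ofReal_lt_top).ne
    have h1 : Real.exp (-C) ≤ (I y).toReal := by
      have := ENNReal.toReal_mono hne (hlb y)
      rwa [ENNReal.toReal_ofReal (Real.exp_nonneg _)] at this
    have h2 : (I y).toReal ≤ Real.exp C := by
      have := ENNReal.toReal_mono ofReal_ne_top (hub y)
      rwa [ENNReal.toReal_ofReal (Real.exp_nonneg _)] at this
    have hpos : 0 < (I y).toReal := lt_of_lt_of_le (Real.exp_pos _) h1
    rw [abs_le]
    constructor
    · calc -|C| ≤ -C := neg_le_neg (le_abs_self C)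
        _ = Real.log (Real.exp (-C)) := (Real.log_exp _).symm
        _ ≤ Real.log (I y).toReal := Real.log_le_log (Real.exp_pos _) h1
    · calc Real.log (I y).toReal ≤ Real.log (Real.exp C) := Real.log_le_log hpos h2
        _ = C := Real.log_exp _
        _ ≤ |C| := le_abs_self C
  have := h₁ F G hFm hGm ⟨|M|, hbnd If M hIf_lb hIf_ub⟩ ⟨|N|, hbnd Ig N hIg_lb hIg_ub⟩ hkey
  have hlift : ∀ (h : Y × Z → ℝ) (hh : Measurable h) (I : Y → ℝ≥0∞),
      (I = fun y => ∫⁻ z, ENNReal.ofReal (Real.exp (h (y, z))) ∂μ₂) → (∀ y, I y ≠ ∞) →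
      (∀ y, 0 < (I y).toReal) →
      (∫⁻ y, ENNReal.ofReal (Real.exp (Real.log (I y).toReal)) ∂μ₁)
        = ∫⁻ p, ENNReal.ofReal (Real.exp (h p)) ∂(μ₁.prod μ₂) := by
    intro h hh I hIdef hne hpos
    have : ∀ y, ENNReal.ofReal (Real.exp (Real.log (I y).toReal)) = I y := by
      intro y
      rw [Real.exp_log (hpos y), ENNReal.ofReal_toReal (hne y)]
    simp_rw [this, hIdef]
    rw [lintegral_prod (fun p => ENNReal.ofReal (Real.exp (h p)))
      (((ENNReal.measurable_ofReal.comp (Real.measurable_exp.comp hh))).aemeasurable)]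
  rwa [hlift f hf If hIf hIf_ne hIf_pos, hlift g hg Ig hIg hIg_ne hIg_pos] at this

theorem DualIneq.pi {X : Type*} [MeasurableSpace X] {μ : Measure X} [IsProbabilityMeasure μ]
    {c : X → X → ℝ} (h : DualIneq μ c) (n : ℕ) :
    DualIneq (Measure.pi fun _ : Fin n => μ) (fun x y => ∑ i, c (x i) (y i)) := by
  induction n with
  | zero =>
    intro f g hf hg hbf hbg hfg
    have hlc : ∀ u : (Fin 0 → X) → ℝ,
        ∫⁻ x, ENNReal.ofReal (Real.exp (u x)) ∂(Measure.pi fun _ : Fin 0 => μ)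
          = ENNReal.ofReal (Real.exp (u default)) := by
      intro u
      rw [lintegral_congr (g := fun _ => ENNReal.ofReal (Real.exp (u default)))
        (fun x => by rw [Subsingleton.elim x default]), lintegral_const, measure_univ, mul_one]
    rw [hlc f, hlc g, ← ENNReal.ofReal_mul (Real.exp_nonneg _), ← Real.exp_add]
    have h0 := hfg default default
    simp only [Finset.univ_eq_empty, Finset.sum_empty] at h0
    calc ENNReal.ofReal (Real.exp (f default + g default))
        ≤ ENNReal.ofReal (Real.exp 0) := ENNReal.ofReal_le_ofReal (Real.exp_le_exp.2 h0)
      _ = 1 := by simp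
  | succ n ih =>
    have H := (h.prod ih).transfer (MeasurableEquiv.piFinSuccAbove (fun _ : Fin (n+1) => X) 0)
      (measurePreserving_piFinSuccAbove (fun _ : Fin (n+1) => μ) 0)
    intro f g hf hg hbf hbg hfg
    refine H f g hf hg hbf hbg fun x y => (hfg x y).trans (le_of_eq ?_)
    show ∑ i : Fin (n+1), c (x i) (y i) = _
    rw [Fin.sum_univ_succ]
    simp [MeasurableEquiv.piFinSuccAbove, Fin.removeNth, Fin.tail]

theorem concentration_of_dual {X : Type*}
    [MeasurableSpace X] [TopologicalSpace X] [SecondCountableTopology X] [BorelSpace X]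
    (c : X → X → ℝ) (hcnn : ∀ x y, 0 ≤ c x y)
    (hc : Continuous fun p : X × X => c p.1 p.2)
    (μ : Measure X) [IsProbabilityMeasure μ]
    (n : ℕ)
    (hdual : DualIneq (Measure.pi fun _ : Fin n => μ) (fun x y => ∑ i, c (x i) (y i)))
    (A : Set (Fin n → X)) (hA : MeasurableSet A)
    (hApos : 0 < Measure.pi (fun _ : Fin n => μ) A)
    (r : ℝ) (hr : 0 ≤ r) :
    1 - ENNReal.ofReal (Real.exp (-r)) / Measure.pi (fun _ : Fin n => μ) A ≤
      Measure.pi (fun _ : Fin n => μ)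
        {x : Fin n → X | ∃ y ∈ A, ∑ i, c (x i) (y i) ≤ r} := by
  set μn := Measure.pi fun _ : Fin n => μ with hμn
  set E := {x : Fin n → X | ∃ y ∈ A, ∑ i, c (x i) (y i) ≤ r} with hE
  set O := {x : Fin n → X | ∃ y ∈ A, ∑ i, c (x i) (y i) < r} with hO
  have hOopen : IsOpen O := by
    have hrw : O = ⋃ y ∈ A, {x : Fin n → X | ∑ i, c (x i) (y i) < r} := by
      ext x; simp [hO]
    rw [hrw]
    refine isOpen_biUnion fun y _ => ?_
    have hcont : Continuous fun x : Fin n → X => ∑ i, c (x i) (y i) := by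
      apply continuous_finset_sum
      intro i _
      have h1 : Continuous fun x : Fin n → X => ((x i, y i) : X × X) :=
        (continuous_apply i).prodMk continuous_const
      exact hc.comp h1
    exact isOpen_lt hcont continuous_const
  set D := Oᶜ with hD
  have hDmeas : MeasurableSet D := hOopen.measurableSet.compl
  set f : (Fin n → X) → ℝ := D.indicator fun _ => r with hfdef
  set g : (Fin n → X) → ℝ := Aᶜ.indicator fun _ => -r with hgdef
  have hfm : Measurable f := measurable_const.indicator hDmeas
  have hgm : Measurable g := measurable_const.indicator hA.compl
  have hfb : ∀ x, |f x| ≤ |r| := by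
    intro x
    rw [hfdef]
    by_cases hx : x ∈ D <;> simp [indicator_of_mem, indicator_of_notMem, hx, abs_nonneg]
  have hgb : ∀ x, |g x| ≤ |r| := by
    intro x
    rw [hgdef]
    by_cases hx : x ∈ Aᶜ <;> simp [indicator_of_mem, indicator_of_notMem, hx, abs_nonneg]
  have hsum_nn : ∀ x y : Fin n → X, 0 ≤ ∑ i, c (x i) (y i) := fun x y =>
    Finset.sum_nonneg fun i _ => hcnn _ _
  have hcons : ∀ x y : Fin n → X, f x + g y ≤ ∑ i, c (x i) (y i) := by
    intro x y
    by_cases hy : y ∈ A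
    · have hgy : g y = 0 := indicator_of_notMem (by simpa using hy) _
      by_cases hx : x ∈ D
      · have hfx : f x = r := indicator_of_mem hx _
        have : ¬ (∑ i, c (x i) (y i) < r) := by
          intro hlt
          exact hx (by exact ⟨y, hy, hlt⟩)
        rw [hfx, hgy, add_zero]
        exact le_of_not_gt this
      · have hfx : f x = 0 := indicator_of_notMem hx _
        rw [hfx, hgy, add_zero]
        exact hsum_nn x y
    · have hgy : g y = -r := indicator_of_mem (by simpa using hy) _
      have hfx : f x ≤ r := by
        rw [hfdef]
        by_cases hx : x ∈ D <;>
          simp [indicator_of_mem, indicator_of_notMem, hx, hr]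
      rw [hgy]
      calc f x + -r ≤ r + -r := by linarith
        _ = 0 := by ring
        _ ≤ _ := hsum_nn x y
  have key := hdual f g hfm hgm ⟨|r|, hfb⟩ ⟨|r|, hgb⟩ hcons
  have hf_lb : ENNReal.ofReal (Real.exp r) * μn D
      ≤ ∫⁻ x, ENNReal.ofReal (Real.exp (f x)) ∂μn := by
    rw [← lintegral_indicator_const hDmeas (ENNReal.ofReal (Real.exp r))]
    refine lintegral_mono fun x => ?_
    by_cases hx : x ∈ D
    · rw [indicator_of_mem hx, hfdef, indicator_of_mem hx]
    · rw [indicator_of_notMem hx]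
      exact zero_le
  have hg_lb : μn A ≤ ∫⁻ x, ENNReal.ofReal (Real.exp (g x)) ∂μn := by
    have h2 : (1 : ℝ≥0∞) * μn A ≤ ∫⁻ x, ENNReal.ofReal (Real.exp (g x)) ∂μn := by
      rw [← lintegral_indicator_const hA (1 : ℝ≥0∞)]
      refine lintegral_mono fun x => ?_
      by_cases hx : x ∈ A
      · rw [indicator_of_mem hx]
        have : g x = 0 := indicator_of_notMem (by simpa using hx) _
        simp [this]
      · rw [indicator_of_notMem hx]
        exact zero_le
    simpa using h2
  have hmain : ENNReal.ofReal (Real.exp r) * μn D * μn A ≤ 1 :=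
    le_trans (mul_le_mul' hf_lb hg_lb) key
  have hDbound : μn D * μn A ≤ ENNReal.ofReal (Real.exp (-r)) := by
    have hrw : ENNReal.ofReal (Real.exp (-r)) = (ENNReal.ofReal (Real.exp r))⁻¹ := by
      rw [← ENNReal.ofReal_inv_of_pos (Real.exp_pos _), Real.exp_neg]
    rw [hrw, ENNReal.le_inv_iff_mul_le]
    calc μn D * μn A * ENNReal.ofReal (Real.exp r)
        = ENNReal.ofReal (Real.exp r) * μn D * μn A := by ring
      _ ≤ 1 := hmain
  have hEc : μn Eᶜ ≤ ENNReal.ofReal (Real.exp (-r)) / μn A := by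
    have hEcD : Eᶜ ⊆ D := by
      intro x hx
      intro hxO
      obtain ⟨y, hy, hlt⟩ := hxO
      exact hx ⟨y, hy, hlt.le⟩
    have h1 : μn Eᶜ * μn A ≤ ENNReal.ofReal (Real.exp (-r)) :=
      le_trans (mul_le_mul' (measure_mono hEcD) le_rfl) hDbound
    rw [ENNReal.le_div_iff_mul_le (Or.inl hApos.ne') (Or.inl (measure_ne_top μn A))]
    exact h1
  rw [tsub_le_iff_right]
  calc (1 : ℝ≥0∞) = μn Set.univ := measure_univ.symm
    _ = μn (E ∪ Eᶜ) := by rw [union_compl_self]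
    _ ≤ μn E + μn Eᶜ := measure_union_le _ _
    _ ≤ μn E + ENNReal.ofReal (Real.exp (-r)) / μn A := add_le_add le_rfl hEc


/-- Dimension-free concentration of measure from a strong TCI. -/
theorem stmt14 {X : Type*}
    [MeasurableSpace X] [TopologicalSpace X] [PolishSpace X] [BorelSpace X]
    (c : X → X → ℝ) (hcnn : ∀ x y, 0 ≤ c x y)
    (hc : Continuous fun p : X × X => c p.1 p.2)
    (hczero : ∀ x, c x x = 0)
    (μ : Measure X) [IsProbabilityMeasure μ]
    (hTCI : StrongTCI μ c)
    (n : ℕ) (hn : 0 < n)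
    (A : Set (Fin n → X)) (hA : MeasurableSet A)
    (hApos : 0 < Measure.pi (fun _ : Fin n => μ) A)
    (r : ℝ) (hr : 0 ≤ r) :
    1 - ENNReal.ofReal (Real.exp (-r)) / Measure.pi (fun _ : Fin n => μ) A ≤
      Measure.pi (fun _ : Fin n => μ)
        {x : Fin n → X | ∃ y ∈ A, ∑ i, c (x i) (y i) ≤ r} := by
  exact concentration_of_dual c hcnn hc μ n ((DualIneq.of_strongTCI hTCI).pi n) A hA hApos r hr

end
end

section
/- Let θ : ℝ^p → [0,∞) be a convex function with θ(−x) = θ(x), and set c(x,y) = θ(x−y). If a probability measure μ on ℝ^p satisfies the TCI with cost c, then μ satisfies the strong TCI with the cost function c̃(x,y) = 2 θ((x−y)/2). -/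
open MeasureTheory ProbabilityTheory Filter Set ENNReal

noncomputable section

/-- A TCI with a symmetric convex cost implies a strong TCI with the halved cost. -/
theorem stmt15 {p : ℕ} (θ : (Fin p → ℝ) → ℝ) (hθnn : ∀ x, 0 ≤ θ x)
    (hθconv : ConvexOn ℝ univ θ) (hθsymm : ∀ x, θ (-x) = θ x)
    (μ : Measure (Fin p → ℝ)) [IsProbabilityMeasure μ]
    (hTCI : TCI μ (fun x y => θ (x - y))) :
    StrongTCI μ (fun x y => 2 * θ ((2⁻¹ : ℝ) • (x - y))) := by
  classical
  have hθc : Continuous θ := continuousOn_univ.mp (hθconv.continuousOn isOpen_univ)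
  intro ν β hν hβ
  -- it suffices to prove the "triangle inequality" for transport costs
  have main : transportCost (fun x y => 2 * θ ((2⁻¹ : ℝ) • (x - y))) ν β ≤
      transportCost (fun x y => θ (x - y)) ν μ + transportCost (fun x y => θ (x - y)) β μ := by
    simp only [transportCost]
    simp_rw [ENNReal.iInf_add, ENNReal.add_iInf]
    refine le_iInf fun π₁ => le_iInf fun h1f => le_iInf fun h1s =>
      le_iInf fun π₂ => le_iInf fun h2f => le_iInf fun h2s => ?_
    -- π₁ and π₂ are probability measures
    haveI : IsProbabilityMeasure π₁ := by
      constructor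
      have := Measure.map_apply (μ := π₁) measurable_fst MeasurableSet.univ
      rw [h1f] at this
      simpa using this.symm
    haveI : IsProbabilityMeasure π₂ := by
      constructor
      have := Measure.map_apply (μ := π₂) measurable_fst MeasurableSet.univ
      rw [h2f] at this
      simpa using this.symm
    set σ₁ : Measure ((Fin p → ℝ) × (Fin p → ℝ)) := π₁.map Prod.swap with hσ₁def
    set σ₂ : Measure ((Fin p → ℝ) × (Fin p → ℝ)) := π₂.map Prod.swap with hσ₂def
    haveI : IsProbabilityMeasure σ₁ := Measure.isProbabilityMeasure_map measurable_swap.aemeasurable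
    haveI : IsProbabilityMeasure σ₂ := Measure.isProbabilityMeasure_map measurable_swap.aemeasurable
    have hσ₁f : σ₁.fst = μ := by
      rw [Measure.fst, hσ₁def, Measure.map_map measurable_fst measurable_swap]
      exact h1s
    have hσ₂f : σ₂.fst = μ := by
      rw [Measure.fst, hσ₂def, Measure.map_map measurable_fst measurable_swap]
      exact h2s
    have hσ₁s : σ₁.snd = ν := by
      rw [Measure.snd, hσ₁def, Measure.map_map measurable_snd measurable_swap]
      exact h1f
    have hσ₂s : σ₂.snd = β := by
      rw [Measure.snd, hσ₂def, Measure.map_map measurable_snd measurable_swap]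
      exact h2f
    set κ₁ := σ₁.condKernel with hκ₁def
    set κ₂ := σ₂.condKernel with hκ₂def
    have hσ₁ : μ ⊗ₘ κ₁ = σ₁ := by
      conv_lhs => rw [← hσ₁f]
      exact σ₁.disintegrate σ₁.condKernel
    have hσ₂ : μ ⊗ₘ κ₂ = σ₂ := by
      conv_lhs => rw [← hσ₂f]
      exact σ₂.disintegrate σ₂.condKernel
    set κ := κ₁ ×ₖ κ₂ with hκdef
    set ρ := μ ⊗ₘ κ with hρdef
    set π : Measure ((Fin p → ℝ) × (Fin p → ℝ)) := ρ.map Prod.snd with hπdef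
    -- marginals of the glued coupling
    have hmarg : ∀ (κ' : Kernel (Fin p → ℝ) (Fin p → ℝ)), IsMarkovKernel κ' →
        ∀ s : Set (Fin p → ℝ), MeasurableSet s →
        (μ ⊗ₘ κ') (Prod.snd ⁻¹' s) = ∫⁻ z, κ' z s ∂μ := by
      intro κ' _ s hs
      rw [Measure.compProd_apply (measurable_snd hs)]
      rfl
    have hπf : π.map Prod.fst = ν := by
      rw [hπdef, Measure.map_map measurable_fst measurable_snd]
      ext s hs
      have h1 : (ρ.map (Prod.fst ∘ Prod.snd)) s
          = ∫⁻ z, κ₁ z s ∂μ := by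
        rw [Measure.map_apply (measurable_fst.comp measurable_snd) hs, hρdef,
          Measure.compProd_apply ((measurable_fst.comp measurable_snd) hs)]
        congr 1
        ext z
        have : Prod.mk z ⁻¹' ((Prod.fst ∘ Prod.snd : (Fin p → ℝ) × ((Fin p → ℝ) × (Fin p → ℝ)) → _) ⁻¹' s)
            = Prod.fst ⁻¹' s := rfl
        rw [this, hκdef, Kernel.prod_apply, ← Set.prod_univ, Measure.prod_prod, measure_univ,
          mul_one]
      have h2 : ν s = ∫⁻ z, κ₁ z s ∂μ := by
        rw [← hσ₁s, Measure.snd_apply hs, ← hσ₁, hmarg κ₁ inferInstance s hs]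
      rw [h1, h2]
    have hπs : π.map Prod.snd = β := by
      rw [hπdef, Measure.map_map measurable_snd measurable_snd]
      ext s hs
      have h1 : (ρ.map (Prod.snd ∘ Prod.snd)) s
          = ∫⁻ z, κ₂ z s ∂μ := by
        rw [Measure.map_apply (measurable_snd.comp measurable_snd) hs, hρdef,
          Measure.compProd_apply ((measurable_snd.comp measurable_snd) hs)]
        congr 1
        ext z
        have : Prod.mk z ⁻¹' ((Prod.snd ∘ Prod.snd : (Fin p → ℝ) × ((Fin p → ℝ) × (Fin p → ℝ)) → _) ⁻¹' s)
            = Prod.snd ⁻¹' s := rfl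
        rw [this, hκdef, Kernel.prod_apply, ← Set.univ_prod, Measure.prod_prod, measure_univ,
          one_mul]
      have h2 : β s = ∫⁻ z, κ₂ z s ∂μ := by
        rw [← hσ₂s, Measure.snd_apply hs, ← hσ₂, hmarg κ₂ inferInstance s hs]
      rw [h1, h2]
    -- cost estimate
    have hmeasθ : Measurable θ := hθc.measurable
    have hcost : (∫⁻ q, ENNReal.ofReal (2 * θ ((2⁻¹ : ℝ) • (q.1 - q.2))) ∂π)
        ≤ (∫⁻ q, ENNReal.ofReal (θ (q.1 - q.2)) ∂π₁)
          + ∫⁻ q, ENNReal.ofReal (θ (q.1 - q.2)) ∂π₂ := by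
      have hfm : Measurable fun q : (Fin p → ℝ) × (Fin p → ℝ) =>
          ENNReal.ofReal (2 * θ ((2⁻¹ : ℝ) • (q.1 - q.2))) := by fun_prop
      have hg₁ : Measurable fun q : (Fin p → ℝ) × (Fin p → ℝ) =>
          ENNReal.ofReal (θ (q.2 - q.1)) := by fun_prop
      have hg₂ : Measurable fun q : (Fin p → ℝ) × (Fin p → ℝ) =>
          ENNReal.ofReal (θ (q.1 - q.2)) := by fun_prop
      have key : ∀ z, (∫⁻ w, ENNReal.ofReal (2 * θ ((2⁻¹ : ℝ) • (w.1 - w.2))) ∂(κ z))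
          ≤ (∫⁻ x, ENNReal.ofReal (θ (x - z)) ∂(κ₁ z))
            + ∫⁻ y, ENNReal.ofReal (θ (z - y)) ∂(κ₂ z) := by
        intro z
        rw [hκdef, Kernel.prod_apply, MeasureTheory.lintegral_prod _ hfm.aemeasurable]
        have hbound : ∀ x y : Fin p → ℝ, ENNReal.ofReal (2 * θ ((2⁻¹ : ℝ) • (x - y)))
            ≤ ENNReal.ofReal (θ (x - z)) + ENNReal.ofReal (θ (z - y)) := by
          intro x y
          rw [← ENNReal.ofReal_add (hθnn _) (hθnn _)]
          apply ENNReal.ofReal_le_ofReal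
          have hmid : (2⁻¹ : ℝ) • (x - y) = (2⁻¹ : ℝ) • (x - z) + (2⁻¹ : ℝ) • (z - y) := by
            rw [← smul_add]
            congr 1
            abel
          have := hθconv.2 (mem_univ (x - z)) (mem_univ (z - y))
            (by norm_num : (0:ℝ) ≤ 2⁻¹) (by norm_num : (0:ℝ) ≤ 2⁻¹) (by norm_num)
          simp only [smul_eq_mul] at this
          rw [hmid]
          linarith
        calc ∫⁻ x, ∫⁻ y, ENNReal.ofReal (2 * θ ((2⁻¹ : ℝ) • (x - y))) ∂(κ₂ z) ∂(κ₁ z)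
            ≤ ∫⁻ x, ∫⁻ y, (ENNReal.ofReal (θ (x - z)) + ENNReal.ofReal (θ (z - y))) ∂(κ₂ z)
              ∂(κ₁ z) := lintegral_mono fun x => lintegral_mono fun y => hbound x y
          _ = ∫⁻ x, (ENNReal.ofReal (θ (x - z))
                + ∫⁻ y, ENNReal.ofReal (θ (z - y)) ∂(κ₂ z)) ∂(κ₁ z) := by
              congr 1
              ext x
              rw [lintegral_add_left measurable_const, lintegral_const, measure_univ, mul_one]
          _ = (∫⁻ x, ENNReal.ofReal (θ (x - z)) ∂(κ₁ z))
                + ∫⁻ y, ENNReal.ofReal (θ (z - y)) ∂(κ₂ z) := by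
              rw [lintegral_add_right _ measurable_const, lintegral_const, measure_univ, mul_one]
      calc ∫⁻ q, ENNReal.ofReal (2 * θ ((2⁻¹ : ℝ) • (q.1 - q.2))) ∂π
          = ∫⁻ a, ENNReal.ofReal (2 * θ ((2⁻¹ : ℝ) • (a.2.1 - a.2.2))) ∂ρ := by
            rw [hπdef]; exact lintegral_map hfm measurable_snd
        _ = ∫⁻ z, ∫⁻ w, ENNReal.ofReal (2 * θ ((2⁻¹ : ℝ) • (w.1 - w.2))) ∂(κ z) ∂μ := by
            rw [hρdef]; exact Measure.lintegral_compProd (hfm.comp measurable_snd)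
        _ ≤ ∫⁻ z, ((∫⁻ x, ENNReal.ofReal (θ (x - z)) ∂(κ₁ z))
              + ∫⁻ y, ENNReal.ofReal (θ (z - y)) ∂(κ₂ z)) ∂μ := lintegral_mono key
        _ = (∫⁻ z, ∫⁻ x, ENNReal.ofReal (θ (x - z)) ∂(κ₁ z) ∂μ)
              + ∫⁻ z, ∫⁻ y, ENNReal.ofReal (θ (z - y)) ∂(κ₂ z) ∂μ := by
            have m1 : Measurable fun z => ∫⁻ x, ENNReal.ofReal (θ (x - z)) ∂(κ₁ z) :=
              Measurable.lintegral_kernel_prod_right' hg₁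
            exact lintegral_add_left m1 _
        _ = (∫⁻ q, ENNReal.ofReal (θ (q.1 - q.2)) ∂π₁)
              + ∫⁻ q, ENNReal.ofReal (θ (q.1 - q.2)) ∂π₂ := by
            congr 1
            · calc ∫⁻ z, ∫⁻ x, ENNReal.ofReal (θ (x - z)) ∂(κ₁ z) ∂μ
                  = ∫⁻ q, ENNReal.ofReal (θ (q.2 - q.1)) ∂(μ ⊗ₘ κ₁) :=
                    (Measure.lintegral_compProd hg₁).symm
                _ = ∫⁻ q, ENNReal.ofReal (θ (q.2 - q.1)) ∂σ₁ := by rw [hσ₁]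
                _ = ∫⁻ q, ENNReal.ofReal (θ (q.1 - q.2)) ∂π₁ := by
                    rw [hσ₁def]; exact lintegral_map hg₁ measurable_swap
            · calc ∫⁻ z, ∫⁻ y, ENNReal.ofReal (θ (z - y)) ∂(κ₂ z) ∂μ
                  = ∫⁻ q, ENNReal.ofReal (θ (q.1 - q.2)) ∂(μ ⊗ₘ κ₂) :=
                    (Measure.lintegral_compProd hg₂).symm
                _ = ∫⁻ q, ENNReal.ofReal (θ (q.1 - q.2)) ∂σ₂ := by rw [hσ₂]
                _ = ∫⁻ q, ENNReal.ofReal (θ (q.2 - q.1)) ∂π₂ := by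
                    rw [hσ₂def]; exact lintegral_map hg₂ measurable_swap
                _ = ∫⁻ q, ENNReal.ofReal (θ (q.1 - q.2)) ∂π₂ := by
                    congr 1
                    ext q
                    rw [← hθsymm (q.1 - q.2), neg_sub]
    refine le_trans ?_ hcost
    exact iInf_le_of_le π (iInf_le_of_le hπf (iInf_le_of_le hπs le_rfl))
  exact main.trans (add_le_add (hTCI ν hν) (hTCI β hβ))

end
end

section
/- Let ν be a probability measure on [0,∞) such that ν([h,+∞)) ≤ e^{−a₀ h} for all h ≥ 0 for some a₀ > 0, let α ∈ 𝒜, and suppose ∫ e^{α(b₀ z)} dν(z) ≤ K for some b₀ > 0 and K > 0. Then there is a constant a > 0 depending only on a₀, b₀ and K (one may take a = min(a₀, b₀/2, [(2/b₀) α⁻¹(log K)]⁻¹)) such that ν([h,+∞)) ≤ e^{−a h} for all 0 ≤ h ≤ 1/a, and ν([h,+∞)) ≤ e^{−α(a h)} for all h ≥ 1/a. -/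
open MeasureTheory ProbabilityTheory Filter Set ENNReal

noncomputable section

theorem alpha_ge_sub_one (α : ℝ → ℝ) (hα : MemA α) : ∀ t ≥ (0:ℝ), t - 1 ≤ α t := by
  obtain ⟨hpos, heven, hcont, hmono, h0, hsup, hsq⟩ := hα
  have h1 : α 1 = 1 := by have := hsq 1 (by norm_num); simpa using this
  have hn : ∀ n : ℕ, (n:ℝ) ≤ α n := by
    intro n
    induction n with
    | zero => simp [h0]
    | succ k ih =>
      have hs := hsup k 1 (by positivity) (by norm_num)
      push_cast
      calc (k:ℝ) + 1 ≤ α k + α 1 := by rw [h1]; linarith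
        _ ≤ α ((k:ℝ) + 1) := hs
  intro t ht
  have hfl : (⌊t⌋₊ : ℝ) ≤ t := Nat.floor_le ht
  have h2 : t - 1 < (⌊t⌋₊ : ℝ) := Nat.sub_one_lt_floor t
  have h3 := hmono (mem_Ici.2 (by positivity : (0:ℝ) ≤ (⌊t⌋₊:ℝ))) (mem_Ici.2 ht) hfl
  linarith [hn ⌊t⌋₊]

/-- Technical lemma: a uniform exponential tail bound together with a uniform
exponential moment bound yields a uniform `α`-tail bound, with a constant depending
only on `a₀`, `b₀` and `K`. -/
theorem stmt18 (a₀ b₀ K : ℝ) (ha₀ : 0 < a₀) (hb₀ : 0 < b₀) (hK : 0 < K)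
    (α : ℝ → ℝ) (hα : MemA α) :
    ∃ a > (0:ℝ), ∀ ν : Measure ℝ, IsProbabilityMeasure ν → ν (Iio 0) = 0 →
      (∀ h ≥ (0:ℝ), ν (Ici h) ≤ ENNReal.ofReal (Real.exp (-a₀ * h))) →
      (∫⁻ z, ENNReal.ofReal (Real.exp (α (b₀ * z))) ∂ν ≤ ENNReal.ofReal K) →
      (∀ h : ℝ, 0 ≤ h → h ≤ 1 / a → ν (Ici h) ≤ ENNReal.ofReal (Real.exp (-a * h))) ∧
      (∀ h ≥ 1 / a, ν (Ici h) ≤ ENNReal.ofReal (Real.exp (-α (a * h)))) := by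
  obtain ⟨hpos, heven, hcont, hmono, h0, hsup, hsq⟩ := id hα
  set L : ℝ := |Real.log K| + 1 with hL
  have hLpos : 0 < L := by positivity
  set a : ℝ := min a₀ (min (b₀ / 2) (b₀ / (2 * L))) with ha_def
  have ha : 0 < a := by
    apply lt_min ha₀
    exact lt_min (by positivity) (by positivity)
  have haa₀ : a ≤ a₀ := min_le_left _ _
  have hab₀ : a ≤ b₀ / 2 := le_trans (min_le_right _ _) (min_le_left _ _)
  have haL : a ≤ b₀ / (2 * L) := le_trans (min_le_right _ _) (min_le_right _ _)
  refine ⟨a, ha, fun ν hν hν0 htail hmom => ⟨?_, ?_⟩⟩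
  · intro h hh0 _
    refine le_trans (htail h hh0) (ENNReal.ofReal_le_ofReal ?_)
    apply Real.exp_le_exp.2
    nlinarith
  · intro h hh
    have hh0 : 0 < h := lt_of_lt_of_le (by positivity) hh
    -- Chernoff
    set f : ℝ → ℝ≥0∞ := fun z => ENNReal.ofReal (Real.exp (α (b₀ * z))) with hf
    set ε : ℝ≥0∞ := ENNReal.ofReal (Real.exp (α (b₀ * h))) with hε
    have hfm : AEMeasurable f ν := by
      apply Measurable.aemeasurable
      exact (ENNReal.continuous_ofReal.comp (Real.continuous_exp.comp
        (hcont.comp (continuous_const.mul continuous_id)))).measurable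
    have hsub : Ici h ⊆ {x | ε ≤ f x} := by
      intro z hz
      simp only [mem_setOf_eq, hf, hε]
      apply ENNReal.ofReal_le_ofReal
      apply Real.exp_le_exp.2
      exact hmono (mem_Ici.2 (by positivity)) (mem_Ici.2 (by nlinarith [mem_Ici.1 hz]))
        (by nlinarith [mem_Ici.1 hz])
    have key : ε * ν (Ici h) ≤ ENNReal.ofReal K := by
      calc ε * ν (Ici h) ≤ ε * ν {x | ε ≤ f x} :=
            mul_le_mul_right (measure_mono hsub) ε
        _ ≤ ∫⁻ z, f z ∂ν := mul_meas_ge_le_lintegral₀ hfm ε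
        _ ≤ ENNReal.ofReal K := hmom
    have hεpos : (0:ℝ) < Real.exp (α (b₀ * h)) := Real.exp_pos _
    have hdiv : ν (Ici h) ≤ ENNReal.ofReal K / ε := by
      rw [ENNReal.le_div_iff_mul_le (Or.inl (ENNReal.ofReal_pos.2 hεpos).ne') (Or.inl ENNReal.ofReal_ne_top)]
      rwa [mul_comm]
    have hdiv' : ENNReal.ofReal K / ε = ENNReal.ofReal (K / Real.exp (α (b₀ * h))) := by
      rw [hε, ENNReal.ofReal_div_of_pos hεpos]
    -- real inequality
    have hreal : K / Real.exp (α (b₀ * h)) ≤ Real.exp (-α (a * h)) := by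
      rw [div_le_iff₀ hεpos, ← Real.exp_add]
      nth_rewrite 1 [← Real.exp_log hK]
      apply Real.exp_le_exp.2
      -- log K ≤ α (b₀ h) - α (a h)
      have hsup' := hsup (a * h) ((b₀ - a) * h) (by positivity)
        (by nlinarith)
      rw [show a * h + (b₀ - a) * h = b₀ * h by ring] at hsup'
      have hm1 : α (b₀ / 2 * h) ≤ α ((b₀ - a) * h) :=
        hmono (mem_Ici.2 (by positivity)) (mem_Ici.2 (by nlinarith)) (by nlinarith)
      have hm2 : b₀ / 2 * h - 1 ≤ α (b₀ / 2 * h) :=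
        alpha_ge_sub_one α hα _ (by positivity)
      have hinva : 2 * L / b₀ ≤ 1 / a := by
        rw [div_le_div_iff₀ (by positivity) ha]
        have : a * (2 * L) ≤ b₀ := by
          have := (le_div_iff₀ (by positivity : (0:ℝ) < 2 * L)).1 haL
          linarith
        linarith
      have hbh : L ≤ b₀ / 2 * h := by
        have : 2 * L / b₀ ≤ h := le_trans hinva hh
        calc L = b₀ / 2 * (2 * L / b₀) := by field_simp
          _ ≤ b₀ / 2 * h := by
              apply mul_le_mul_of_nonneg_left this (by positivity)
      have hlogK : Real.log K ≤ L - 1 := by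
        have := le_abs_self (Real.log K); simp [hL]; linarith
      linarith
    calc ν (Ici h) ≤ ENNReal.ofReal K / ε := hdiv
      _ = ENNReal.ofReal (K / Real.exp (α (b₀ * h))) := hdiv'
      _ ≤ ENNReal.ofReal (Real.exp (-α (a * h))) := ENNReal.ofReal_le_ofReal hreal

end
end

section
/- Let μ be a probability measure on ℝ with no atoms and full support, let m be its median, let T = F⁻¹ ∘ F₁ be the monotone rearrangement map transporting the two-sided exponential measure μ₁ onto μ, and let a > 0. Then T is (1/a)-Lipschitz if and only if sup_{x ≥ m} μ_x^+([h,+∞)) ≤ e^{−ah} for all h ≥ 0 and sup_{x ≤ m} μ_x^-([h,+∞)) ≤ e^{−ah} for all h ≥ 0 (i.e. all the measures μ_x^+ for x ≥ m and μ_x^- for x ≤ m are stochastically dominated by the one-sided exponential distribution ν_a with density a e^{−ay} 1_{[0,∞)}(y)). -/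
open MeasureTheory ProbabilityTheory Filter Set ENNReal

noncomputable section

section Aux
open scoped Topology
set_option linter.unusedSectionVars false

lemma aux_expMeasure_apply (s : Set ℝ) (hs : MeasurableSet s) :
    (expMeasure : Measure ℝ) s = ∫⁻ x in s, ENNReal.ofReal ((1 / 2) * Real.exp (-|x|)) := by
  rw [show (expMeasure : Measure ℝ)
      = volume.withDensity fun x => ENNReal.ofReal ((1 / 2) * Real.exp (-|x|)) from rfl,
    withDensity_apply _ hs]

lemma aux_lint_eq (s : Set ℝ) (hs : MeasurableSet s) (f : ℝ → ℝ) (hf : IntegrableOn f s)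
    (h0 : ∀ t, 0 ≤ f t) (heq : ∀ t ∈ s, (1 / 2) * Real.exp (-|t|) = f t) :
    (expMeasure : Measure ℝ) s = ENNReal.ofReal (∫ t in s, f t) := by
  rw [aux_expMeasure_apply s hs, setLIntegral_congr_fun hs
    (fun t ht => by rw [heq t ht]),
    ofReal_integral_eq_lintegral_ofReal hf (Filter.Eventually.of_forall h0)]

lemma aux_expMeasure_Iic {x : ℝ} (hx : x ≤ 0) :
    (expMeasure : Measure ℝ) (Iic x) = ENNReal.ofReal (Real.exp x / 2) := by
  rw [aux_lint_eq (Iic x) measurableSet_Iic (fun t => (1/2) * Real.exp t)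
    ((integrableOn_exp_Iic x).const_mul _)
    (fun t => by positivity)
    (fun t ht => by rw [abs_of_nonpos (le_trans ht hx), neg_neg])]
  rw [integral_const_mul, integral_exp_Iic]
  ring_nf

lemma aux_expMeasure_Ioi {x : ℝ} (hx : 0 ≤ x) :
    (expMeasure : Measure ℝ) (Ioi x) = ENNReal.ofReal (Real.exp (-x) / 2) := by
  rw [aux_lint_eq (Ioi x) measurableSet_Ioi (fun t => (1/2) * Real.exp (-t))
    (((exp_neg_integrableOn_Ioi x one_pos).congr_fun (fun t ht => by simp)
      measurableSet_Ioi).const_mul _)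
    (fun t => by positivity)
    (fun t ht => by rw [abs_of_nonneg (le_of_lt (lt_of_le_of_lt hx ht))])]
  rw [integral_const_mul, integral_exp_neg_Ioi]
  ring_nf

instance : IsProbabilityMeasure (expMeasure : Measure ℝ) := by
  constructor
  have h : (univ : Set ℝ) = Iic 0 ∪ Ioi 0 := by simp
  rw [h, measure_union (Iic_disjoint_Ioi le_rfl) measurableSet_Ioi,
    aux_expMeasure_Iic le_rfl, aux_expMeasure_Ioi le_rfl,
    ← ENNReal.ofReal_add (by positivity) (by positivity)]
  norm_num

lemma aux_cdf_exp_of_nonpos {x : ℝ} (hx : x ≤ 0) :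
    cdf expMeasure x = Real.exp x / 2 := by
  rw [cdf_eq_real, measureReal_def, aux_expMeasure_Iic hx, ENNReal.toReal_ofReal (by positivity)]

lemma aux_cdf_exp_of_nonneg {x : ℝ} (hx : 0 ≤ x) :
    cdf expMeasure x = 1 - Real.exp (-x) / 2 := by
  have h : (expMeasure : Measure ℝ) (Iic x) = 1 - ENNReal.ofReal (Real.exp (-x) / 2) := by
    rw [← aux_expMeasure_Ioi hx, ← compl_Ioi, prob_compl_eq_one_sub measurableSet_Ioi]
  have hle : Real.exp (-x) / 2 ≤ 1 := by
    have := Real.exp_le_one_iff.mpr (neg_nonpos.mpr hx)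
    linarith
  rw [cdf_eq_real, measureReal_def, h, ← ENNReal.ofReal_one, ← ENNReal.ofReal_sub _ (by positivity),
    ENNReal.toReal_ofReal (by linarith)]

lemma aux_cdf_exp_pos (x : ℝ) : 0 < cdf expMeasure x := by
  rcases le_or_gt x 0 with hx | hx
  · rw [aux_cdf_exp_of_nonpos hx]; positivity
  · rw [aux_cdf_exp_of_nonneg hx.le]
    have := Real.exp_le_one_iff.mpr (neg_nonpos.mpr hx.le)
    linarith

lemma aux_cdf_exp_lt_one (x : ℝ) : cdf expMeasure x < 1 := by
  rcases le_or_gt x 0 with hx | hx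
  · rw [aux_cdf_exp_of_nonpos hx]
    have := Real.exp_le_one_iff.mpr hx
    linarith
  · rw [aux_cdf_exp_of_nonneg hx.le]
    have := Real.exp_pos (-x)
    linarith

lemma aux_cdf_exp_zero : cdf expMeasure (0:ℝ) = 1/2 := by
  rw [aux_cdf_exp_of_nonpos le_rfl, Real.exp_zero]

variable (μ : Measure ℝ) [IsProbabilityMeasure μ] [NullSingletonClass μ] [μ.IsOpenPosMeasure]

lemma aux_cdf_strictMono : StrictMono (cdf μ) := by
  intro x y hxy
  have hsub : Iic x ∪ Ioo x y ⊆ Iic y := by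
    rintro z (hz | hz)
    · exact le_trans hz hxy.le
    · exact hz.2.le
  have hdisj : Disjoint (Iic x) (Ioo x y) := by
    simp only [Set.disjoint_left, mem_Iic, mem_Ioo]
    intro z hz h
    exact absurd hz (not_le.mpr h.1)
  have hpos : 0 < μ (Ioo x y) := isOpen_Ioo.measure_pos μ (nonempty_Ioo.mpr hxy)
  have h1 : μ (Iic x) + μ (Ioo x y) ≤ μ (Iic y) := by
    rw [← measure_union hdisj measurableSet_Ioo]
    exact measure_mono hsub
  have h2 : μ (Iic x) < μ (Iic y) :=
    lt_of_lt_of_le (ENNReal.lt_add_right (measure_ne_top _ _) hpos.ne') h1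
  rw [← ofReal_cdf, ← ofReal_cdf] at h2
  exact (ENNReal.ofReal_lt_ofReal_iff_of_nonneg (cdf_nonneg μ x)).mp h2

lemma aux_cdf_pos (x : ℝ) : 0 < cdf μ x := by
  have h : 0 < μ (Iic x) :=
    lt_of_lt_of_le (isOpen_Ioo.measure_pos μ (nonempty_Ioo.mpr (by linarith : x - 1 < x)))
      (measure_mono (fun z hz => le_of_lt hz.2))
  rw [← ofReal_cdf] at h
  exact ENNReal.ofReal_pos.mp h

lemma aux_cdf_lt_one (x : ℝ) : cdf μ x < 1 := by
  have hpos : 0 < μ (Ioi x) := isOpen_Ioi.measure_pos μ nonempty_Ioi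
  have h1 : μ (Iic x) + μ (Ioi x) = 1 := by
    rw [← measure_union (Iic_disjoint_Ioi le_rfl) measurableSet_Ioi, Iic_union_Ioi, measure_univ]
  have h2 : μ (Iic x) < 1 := by
    rw [← h1]; exact ENNReal.lt_add_right (measure_ne_top _ _) hpos.ne'
  rw [← ofReal_cdf, ← ENNReal.ofReal_one] at h2
  exact (ENNReal.ofReal_lt_ofReal_iff_of_nonneg (cdf_nonneg μ x)).mp h2

lemma aux_measure_Ici (x : ℝ) : μ (Ici x) = ENNReal.ofReal (1 - cdf μ x) := by
  rw [← measure_congr (Ioi_ae_eq_Ici (μ := μ) (a := x)), ← compl_Iic,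
    prob_compl_eq_one_sub measurableSet_Iic, ← ofReal_cdf,
    ENNReal.ofReal_sub _ (cdf_nonneg μ x), ENNReal.ofReal_one]

lemma aux_S_nonempty {r : ℝ} (hr : r < 1) : {z : ℝ | r ≤ cdf μ z}.Nonempty := by
  obtain ⟨z, hz⟩ := ((tendsto_cdf_atTop μ).eventually (eventually_gt_nhds hr)).exists
  exact ⟨z, hz.le⟩

lemma aux_S_bddBelow {r : ℝ} (hr : 0 < r) : BddBelow {z : ℝ | r ≤ cdf μ z} := by
  obtain ⟨z₀, hz₀⟩ : ∃ z₀, cdf μ z₀ < r :=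
    ((tendsto_cdf_atBot μ).eventually (eventually_lt_nhds hr)).exists
  refine ⟨z₀, fun z hz => ?_⟩
  by_contra h
  push_neg at h
  exact absurd (le_trans hz ((monotone_cdf μ) h.le)) (not_le.mpr hz₀)

lemma aux_rearrange_le {t y : ℝ} (h : cdf expMeasure t ≤ cdf μ y) : rearrange μ t ≤ y :=
  csInf_le (aux_S_bddBelow μ (aux_cdf_exp_pos t)) h

lemma aux_le_rearrange {t y : ℝ} (h : ∀ z, cdf expMeasure t ≤ cdf μ z → y ≤ z) :
    y ≤ rearrange μ t :=
  le_csInf (aux_S_nonempty μ (aux_cdf_exp_lt_one t)) h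

lemma aux_rearrange_eq {t x : ℝ} (h : cdf expMeasure t = cdf μ x) : rearrange μ t = x := by
  refine le_antisymm (aux_rearrange_le μ h.le) (aux_le_rearrange μ (fun z hz => ?_))
  exact ((aux_cdf_strictMono μ).le_iff_le).mp (h ▸ hz)

lemma aux_cdf_rearrange_ge (t : ℝ) : cdf expMeasure t ≤ cdf μ (rearrange μ t) := by
  set w := rearrange μ t with hw
  have key : ∀ z, w < z → cdf expMeasure t ≤ cdf μ z := by
    intro z hz
    obtain ⟨u, hu, hu2⟩ :=
      exists_lt_of_csInf_lt (aux_S_nonempty μ (aux_cdf_exp_lt_one t)) hz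
    exact le_trans hu ((monotone_cdf μ) hu2.le)
  have cont : Tendsto (cdf μ) (𝓝[>] w) (𝓝 (cdf μ w)) :=
    ((cdf μ).right_continuous w).mono_left (nhdsWithin_mono _ Ioi_subset_Ici_self)
  exact ge_of_tendsto cont (eventually_nhdsWithin_of_forall key)

lemma aux_cdf_rearrange_le (t : ℝ) : cdf μ (rearrange μ t) ≤ cdf expMeasure t := by
  set w := rearrange μ t with hw
  have key : ∀ z, z < w → cdf μ z ≤ cdf expMeasure t := by
    intro z hz
    by_contra h
    push_neg at h
    exact absurd (csInf_le (aux_S_bddBelow μ (aux_cdf_exp_pos t)) h.le) (not_le.mpr hz)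
  have hunion : Iio w = ⋃ n : ℕ, Iic (w - 1/(n+1)) := by
    ext z
    simp only [mem_Iio, mem_iUnion, mem_Iic]
    constructor
    · intro hz
      obtain ⟨n, hn⟩ := exists_nat_one_div_lt (sub_pos.mpr hz)
      exact ⟨n, by linarith⟩
    · rintro ⟨n, hn⟩
      have : (0:ℝ) < 1/(n+1) := by positivity
      linarith
  have hmono : Monotone (fun n : ℕ => Iic (w - 1/((n:ℝ)+1))) := by
    intro n k hnk
    apply Iic_subset_Iic.mpr
    have h1 : (1:ℝ)/((k:ℝ)+1) ≤ 1/((n:ℝ)+1) := by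
      apply one_div_le_one_div_of_le (by positivity)
      have : (n:ℝ) ≤ (k:ℝ) := Nat.cast_le.mpr hnk
      linarith
    linarith
  have hIio : μ (Iio w) ≤ ENNReal.ofReal (cdf expMeasure t) := by
    rw [hunion, hmono.directed_le.measure_iUnion]
    refine iSup_le (fun n => ?_)
    rw [← ofReal_cdf]
    apply ENNReal.ofReal_le_ofReal
    apply key
    have : (0:ℝ) < 1/((n:ℝ)+1) := by positivity
    linarith
  have hIic : μ (Iic w) ≤ ENNReal.ofReal (cdf expMeasure t) := by
    rwa [← measure_congr (Iio_ae_eq_Iic (μ := μ) (a := w))]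
  rw [← ofReal_cdf] at hIic
  exact (ENNReal.ofReal_le_ofReal_iff (aux_cdf_exp_pos t).le).mp hIic

lemma aux_cdf_rearrange (t : ℝ) : cdf μ (rearrange μ t) = cdf expMeasure t :=
  le_antisymm (aux_cdf_rearrange_le μ t) (aux_cdf_rearrange_ge μ t)

lemma aux_condPlus_iff {x h : ℝ} (hh : 0 ≤ h) (c : ℝ) (hc : 0 ≤ c) :
    condPlus μ x (Ici h) ≤ ENNReal.ofReal c ↔
      1 - cdf μ (x + h) ≤ c * (1 - cdf μ x) := by
  have hmeas : Measurable (fun z : ℝ => z - x) := measurable_id.sub_const x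
  have hpre : (fun z : ℝ => z - x) ⁻¹' (Ici h) = Ici (x + h) := by
    ext z
    simp only [mem_preimage, mem_Ici]
    constructor <;> intro hz <;> linarith
  have hval : condPlus μ x (Ici h) = (μ (Ici x))⁻¹ * μ (Ici (x + h)) := by
    rw [condPlus, Measure.map_apply hmeas measurableSet_Ici, hpre,
      cond_apply measurableSet_Ici,
      inter_eq_self_of_subset_right (Ici_subset_Ici.mpr (by linarith))]
  have hne0 : μ (Ici x) ≠ 0 := by
    rw [aux_measure_Ici]
    simp only [ne_eq, ENNReal.ofReal_eq_zero, not_le]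
    linarith [aux_cdf_lt_one μ x]
  have hnetop : μ (Ici x) ≠ ⊤ := measure_ne_top _ _
  rw [hval, mul_comm, ← div_eq_mul_inv,
    ENNReal.div_le_iff_le_mul (Or.inl hne0) (Or.inl hnetop),
    aux_measure_Ici, aux_measure_Ici, ← ENNReal.ofReal_mul hc]
  exact ENNReal.ofReal_le_ofReal_iff (mul_nonneg hc (by linarith [aux_cdf_lt_one μ x]))

lemma aux_condMinus_iff {x h : ℝ} (hh : 0 ≤ h) (c : ℝ) (hc : 0 ≤ c) :
    condMinus μ x (Ici h) ≤ ENNReal.ofReal c ↔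
      cdf μ (x - h) ≤ c * cdf μ x := by
  have hmeas : Measurable (fun z : ℝ => x - z) := measurable_const.sub measurable_id
  have hpre : (fun z : ℝ => x - z) ⁻¹' (Ici h) = Iic (x - h) := by
    ext z
    simp only [mem_preimage, mem_Ici, mem_Iic]
    constructor <;> intro hz <;> linarith
  have hval : condMinus μ x (Ici h) = (μ (Iic x))⁻¹ * μ (Iic (x - h)) := by
    rw [condMinus, Measure.map_apply hmeas measurableSet_Ici, hpre,
      cond_apply measurableSet_Iic,
      inter_eq_self_of_subset_right (Iic_subset_Iic.mpr (by linarith))]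
  have hne0 : μ (Iic x) ≠ 0 := by
    rw [← ofReal_cdf]
    simp only [ne_eq, ENNReal.ofReal_eq_zero, not_le]
    exact aux_cdf_pos μ x
  have hnetop : μ (Iic x) ≠ ⊤ := measure_ne_top _ _
  rw [hval, mul_comm, ← div_eq_mul_inv,
    ENNReal.div_le_iff_le_mul (Or.inl hne0) (Or.inl hnetop),
    ← ofReal_cdf, ← ofReal_cdf, ← ENNReal.ofReal_mul hc]
  exact ENNReal.ofReal_le_ofReal_iff (mul_nonneg hc (cdf_nonneg μ x))

end Aux

/-- The monotone rearrangement map `T = F⁻¹ ∘ F₁` is `(1/a)`-Lipschitz if and only if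
the conditional laws `μ_x^+` (for `x ≥ m`) and `μ_x^-` (for `x ≤ m`) are uniformly
stochastically dominated by the one-sided exponential distribution of parameter `a`. -/
theorem stmt19 (μ : Measure ℝ) [IsProbabilityMeasure μ] [NullSingletonClass μ] [μ.IsOpenPosMeasure]
    (m : ℝ) (hm : μ (Iic m) = 1 / 2) (a : ℝ) (ha : 0 < a) :
    LipschitzWith (Real.toNNReal (1 / a)) (rearrange μ) ↔
      ((∀ h ≥ (0:ℝ), ∀ x ≥ m, condPlus μ x (Ici h) ≤ ENNReal.ofReal (Real.exp (-a * h))) ∧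
       (∀ h ≥ (0:ℝ), ∀ x ≤ m, condMinus μ x (Ici h) ≤ ENNReal.ofReal (Real.exp (-a * h)))) := by
  have hFm : cdf μ m = 1 / 2 := by
    rw [cdf_eq_real, measureReal_def, hm]
    simp [ENNReal.toReal_div]
  constructor
  · intro hLw
    have hLip : ∀ u v : ℝ, |rearrange μ u - rearrange μ v| ≤ (1/a) * |u - v| := by
      intro u v
      have h1 := hLw.dist_le_mul u v
      rwa [Real.dist_eq, Real.dist_eq, Real.coe_toNNReal _ (by positivity)] at h1
    refine ⟨fun h hh x hx => ?_, fun h hh x hx => ?_⟩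
    · rw [aux_condPlus_iff μ hh _ (Real.exp_pos _).le]
      have hFx1 : cdf μ x < 1 := aux_cdf_lt_one μ x
      have hFxm : 1/2 ≤ cdf μ x := by
        rw [← hFm]; exact (monotone_cdf μ) hx
      set t : ℝ := -Real.log (2 * (1 - cdf μ x)) with ht
      have h2pos : 0 < 2 * (1 - cdf μ x) := by linarith
      have ht0 : 0 ≤ t := by
        rw [ht, neg_nonneg]
        exact Real.log_nonpos (by linarith) (by linarith)
      have hexp : Real.exp (-t) = 2 * (1 - cdf μ x) := by
        rw [ht, neg_neg, Real.exp_log h2pos]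
      have hF1t : cdf expMeasure t = cdf μ x := by
        rw [aux_cdf_exp_of_nonneg ht0, hexp]; ring
      have hTt : rearrange μ t = x := aux_rearrange_eq μ hF1t
      have hstep : rearrange μ (t + a * h) ≤ x + h := by
        have h1 := hLip (t + a*h) t
        have h2 : |t + a*h - t| = a*h := by
          rw [show t + a*h - t = a*h by ring, abs_of_nonneg (by positivity)]
        have h3 : (1/a) * (a*h) = h := by field_simp
        rw [h2, h3] at h1
        have h4 := le_trans (le_abs_self _) h1
        rw [hTt] at h4
        linarith
      have hkey : cdf expMeasure (t + a*h) ≤ cdf μ (x + h) :=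
        le_trans (aux_cdf_rearrange_ge μ _) ((monotone_cdf μ) hstep)
      have hF1 : cdf expMeasure (t + a*h) = 1 - Real.exp (-a*h) * (1 - cdf μ x) := by
        rw [aux_cdf_exp_of_nonneg (add_nonneg ht0 (mul_nonneg ha.le hh)),
          show -(t + a*h) = -t + (-a*h) by ring, Real.exp_add, hexp]
        ring
      rw [hF1] at hkey
      linarith
    · rw [aux_condMinus_iff μ hh _ (Real.exp_pos _).le]
      have hFx0 : 0 < cdf μ x := aux_cdf_pos μ x
      have hFxm : cdf μ x ≤ 1/2 := by
        rw [← hFm]; exact (monotone_cdf μ) hx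
      set t : ℝ := Real.log (2 * cdf μ x) with ht
      have h2pos : 0 < 2 * cdf μ x := by linarith
      have ht0 : t ≤ 0 := Real.log_nonpos (by linarith) (by linarith)
      have hexp : Real.exp t = 2 * cdf μ x := Real.exp_log h2pos
      have hF1t : cdf expMeasure t = cdf μ x := by
        rw [aux_cdf_exp_of_nonpos ht0, hexp]; ring
      have hTt : rearrange μ t = x := aux_rearrange_eq μ hF1t
      have hstep : x - h ≤ rearrange μ (t - a*h) := by
        have h1 := hLip t (t - a*h)
        have h2 : |t - (t - a*h)| = a*h := by
          rw [show t - (t - a*h) = a*h by ring, abs_of_nonneg (by positivity)]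
        have h3 : (1/a) * (a*h) = h := by field_simp
        rw [h2, h3] at h1
        have h4 := le_trans (le_abs_self _) h1
        rw [hTt] at h4
        linarith
      have hkey : cdf μ (x - h) ≤ cdf expMeasure (t - a*h) :=
        le_trans ((monotone_cdf μ) hstep) (aux_cdf_rearrange_le μ _)
      have hF1 : cdf expMeasure (t - a*h) = Real.exp (-a*h) * cdf μ x := by
        rw [aux_cdf_exp_of_nonpos (by nlinarith : t - a*h ≤ 0),
          show t - a*h = t + (-a*h) by ring, Real.exp_add, hexp]
        ring
      rw [hF1] at hkey
      exact hkey
  · rintro ⟨hR, hL⟩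
    have hRreal : ∀ h ≥ (0:ℝ), ∀ x ≥ m, 1 - cdf μ (x+h) ≤ Real.exp (-a*h) * (1 - cdf μ x) :=
      fun h hh x hx => (aux_condPlus_iff μ hh _ (Real.exp_pos _).le).mp (hR h hh x hx)
    have hLreal : ∀ h ≥ (0:ℝ), ∀ x ≤ m, cdf μ (x-h) ≤ Real.exp (-a*h) * cdf μ x :=
      fun h hh x hx => (aux_condMinus_iff μ hh _ (Real.exp_pos _).le).mp (hL h hh x hx)
    have hmono : Monotone (rearrange μ) := by
      intro s t hst
      have h1 : cdf μ (rearrange μ s) ≤ cdf μ (rearrange μ t) := by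
        rw [aux_cdf_rearrange, aux_cdf_rearrange]
        exact (monotone_cdf expMeasure) hst
      exact ((aux_cdf_strictMono μ).le_iff_le).mp h1
    have key0 : ∀ s t : ℝ, 0 ≤ s → s ≤ t → rearrange μ t ≤ rearrange μ s + (t - s)/a := by
      intro s t hs hst
      set x := rearrange μ s with hxdef
      have hFx : cdf μ x = cdf expMeasure s := aux_cdf_rearrange μ s
      have hxm : m ≤ x := by
        have h1 : cdf μ m ≤ cdf μ x := by
          rw [hFx, aux_cdf_exp_of_nonneg hs, hFm]
          have := Real.exp_le_one_iff.mpr (neg_nonpos.mpr hs)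
          linarith
        exact ((aux_cdf_strictMono μ).le_iff_le).mp h1
      set h := (t - s)/a with hdef
      have hh : 0 ≤ h := div_nonneg (by linarith) ha.le
      have hah : a * h = t - s := by
        rw [hdef]; field_simp
      have hcond := hRreal h hh x hxm
      have hcomp : Real.exp (-a*h) * (1 - cdf μ x) = Real.exp (-t)/2 := by
        rw [hFx, aux_cdf_exp_of_nonneg hs, neg_mul, hah,
          show Real.exp (-(t - s)) * (1 - (1 - Real.exp (-s) / 2))
            = (Real.exp (-(t-s)) * Real.exp (-s))/2 by ring,
          ← Real.exp_add, show -(t-s) + -s = -t by ring]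
      have hgoal : cdf expMeasure t ≤ cdf μ (x + h) := by
        rw [aux_cdf_exp_of_nonneg (le_trans hs hst)]
        rw [neg_mul] at hcomp hcond
        linarith
      have h5 := aux_rearrange_le μ hgoal
      linarith
    have keyneg : ∀ s t : ℝ, s ≤ t → t ≤ 0 → rearrange μ t ≤ rearrange μ s + (t - s)/a := by
      intro s t hst htle
      set x := rearrange μ t with hxdef
      have hFx : cdf μ x = cdf expMeasure t := aux_cdf_rearrange μ t
      have hxm : x ≤ m := by
        have h1 : cdf μ x ≤ cdf μ m := by
          rw [hFx, aux_cdf_exp_of_nonpos htle, hFm]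
          have := Real.exp_le_one_iff.mpr htle
          linarith
        exact ((aux_cdf_strictMono μ).le_iff_le).mp h1
      set h := (t - s)/a with hdef
      have hh : 0 ≤ h := div_nonneg (by linarith) ha.le
      have hah : a * h = t - s := by
        rw [hdef]; field_simp
      have hcond := hLreal h hh x hxm
      have hcomp : Real.exp (-a*h) * cdf μ x = Real.exp s / 2 := by
        rw [hFx, aux_cdf_exp_of_nonpos htle, neg_mul, hah,
          show Real.exp (-(t - s)) * (Real.exp t / 2)
            = (Real.exp (-(t-s)) * Real.exp t)/2 by ring,
          ← Real.exp_add, show -(t-s) + t = s by ring]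
      have hFs : cdf μ (x - h) ≤ cdf expMeasure s := by
        rw [aux_cdf_exp_of_nonpos (le_trans hst htle)]
        linarith
      have hlb : x - h ≤ rearrange μ s := by
        apply aux_le_rearrange μ
        intro z hz
        by_contra hcon
        push_neg at hcon
        have h6 : cdf μ z < cdf μ (x - h) := aux_cdf_strictMono μ hcon
        linarith
      linarith
    have key : ∀ s t : ℝ, s ≤ t → rearrange μ t ≤ rearrange μ s + (t - s)/a := by
      intro s t hst
      rcases le_or_gt 0 s with hs | hs
      · exact key0 s t hs hst
      · rcases le_or_gt t 0 with ht | ht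
        · exact keyneg s t hst ht
        · have h1 := key0 0 t le_rfl ht.le
          have h2 := keyneg s 0 hs.le le_rfl
          have hsum : (t - 0)/a + (0 - s)/a = (t - s)/a := by
            rw [← add_div]; ring_nf
          linarith
    apply LipschitzWith.of_dist_le_mul
    intro u v
    rw [Real.dist_eq, Real.dist_eq, Real.coe_toNNReal _ (by positivity)]
    rcases le_total u v with huv | huv
    · have h1 := key u v huv
      have h2 := hmono huv
      have habs1 : |rearrange μ u - rearrange μ v| = rearrange μ v - rearrange μ u := by
        rw [abs_sub_comm, abs_of_nonneg (by linarith)]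
      have habs2 : |u - v| = v - u := by
        rw [abs_sub_comm, abs_of_nonneg (by linarith)]
      rw [habs1, habs2, show (1/a) * (v - u) = (v-u)/a by ring]
      linarith
    · have h1 := key v u huv
      have h2 := hmono huv
      have habs1 : |rearrange μ u - rearrange μ v| = rearrange μ u - rearrange μ v := by
        rw [abs_of_nonneg (by linarith)]
      have habs2 : |u - v| = u - v := by
        rw [abs_of_nonneg (by linarith)]
      rw [habs1, habs2, show (1/a) * (u - v) = (u-v)/a by ring]
      linarith


end
end
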